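/- arXiv:1712.06725 — 6 statements merged into one kernel-verified Lean document; each statement's English description precedes it below -/
import Mathlib

section
/- Let ⋆ be a finite-type star operation on an integral domain R, let M be a ⋆-super potent maximal ⋆-ideal of R, and let I be a ⋆-super rigid ideal of R contained in M. Then ⋂_{n=1}^∞ (Iⁿ)⋆ is a prime ideal of R. -/
open FractionalIdeal

/-- The fractional ideals of `R` inside its field of fractions. -/
abbrev FracId (R : Type*) [CommRing R] : Type _ :=
  FractionalIdeal (nonZeroDivisors R) (FractionRing R)

/-- A star operation on an integral domain `R`: a map on nonzero fractional ideals satisfying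
`(cA)⋆ = c·A⋆`, `R⋆ = R`, `A ⊆ A⋆`, monotonicity, and idempotence.  (The value on the zero
ideal is irrelevant.) -/
structure StarOp (R : Type*) [CommRing R] [IsDomain R] where
  star : FracId R → FracId R
  star_smul : ∀ c : FractionRing R, c ≠ 0 → ∀ I : FracId R, I ≠ 0 →
    star (spanSingleton (nonZeroDivisors R) c * I) = spanSingleton (nonZeroDivisors R) c * star I
  star_one : star 1 = 1
  le_star : ∀ I : FracId R, I ≠ 0 → I ≤ star I
  star_mono : ∀ I J : FracId R, I ≠ 0 → J ≠ 0 → I ≤ J → star I ≤ star J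
  star_idem : ∀ I : FracId R, I ≠ 0 → star (star I) = star I

namespace StarOp

variable {R : Type*} [CommRing R] [IsDomain R]

/-- A star operation has finite type if `A⋆` is the union of `J⋆` over the nonzero finitely
generated (fractional) subideals `J` of `A`. -/
def FiniteType (s : StarOp R) : Prop :=
  ∀ I : FracId R, I ≠ 0 → ∀ x : FractionRing R, (x ∈ s.star I ↔
    ∃ J : FracId R, J ≠ 0 ∧ (J : Submodule R (FractionRing R)).FG ∧ J ≤ I ∧ x ∈ s.star J)

/-- `⋆₁ ≤ ⋆₂` : `I^⋆₁ ⊆ I^⋆₂` for every nonzero fractional ideal `I`. -/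
def le (s₁ s₂ : StarOp R) : Prop := ∀ I : FracId R, I ≠ 0 → s₁.star I ≤ s₂.star I

/-- A (nonzero integral) `⋆`-ideal: an ideal with `I⋆ = I`. -/
def IsStarIdeal (s : StarOp R) (I : Ideal R) : Prop :=
  I ≠ ⊥ ∧ s.star (I : FracId R) = (I : FracId R)

/-- A maximal `⋆`-ideal: maximal among proper integral `⋆`-ideals. -/
def IsMaxStarIdeal (s : StarOp R) (M : Ideal R) : Prop :=
  M ≠ ⊤ ∧ s.IsStarIdeal M ∧ ∀ J : Ideal R, J ≠ ⊤ → s.IsStarIdeal J → M ≤ J → J = M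

/-- A nonzero ideal `I` is `⋆`-invertible if `(I·I⁻¹)⋆ = R`. -/
def IsStarInvertible (s : StarOp R) (I : Ideal R) : Prop :=
  I ≠ ⊥ ∧ s.star ((I : FracId R) * ((1 : FracId R) / (I : FracId R))) = 1

/-- A nonzero finitely generated ideal is `⋆`-rigid if it is contained in exactly one maximal
`⋆`-ideal. -/
def IsRigid (s : StarOp R) (I : Ideal R) : Prop :=
  I ≠ ⊥ ∧ I.FG ∧ ∃! M : Ideal R, s.IsMaxStarIdeal M ∧ I ≤ M

/-- A `⋆`-rigid ideal is `⋆`-super rigid if every finitely generated ideal containing it is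
`⋆`-invertible. -/
def IsSuperRigid (s : StarOp R) (I : Ideal R) : Prop :=
  s.IsRigid I ∧ ∀ J : Ideal R, J.FG → I ≤ J → s.IsStarInvertible J

/-- A maximal `⋆`-ideal is `⋆`-potent if it contains a `⋆`-rigid ideal. -/
def IsPotent (s : StarOp R) (M : Ideal R) : Prop :=
  s.IsMaxStarIdeal M ∧ ∃ I : Ideal R, s.IsRigid I ∧ I ≤ M

/-- A maximal `⋆`-ideal is `⋆`-super potent if it contains a `⋆`-super rigid ideal. -/
def IsSuperPotent (s : StarOp R) (M : Ideal R) : Prop :=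
  s.IsMaxStarIdeal M ∧ ∃ I : Ideal R, s.IsSuperRigid I ∧ I ≤ M

/-- `R` is `⋆`-potent if every maximal `⋆`-ideal is `⋆`-potent. -/
def PotentDomain (s : StarOp R) : Prop :=
  ∀ M : Ideal R, s.IsMaxStarIdeal M → s.IsPotent M

/-- `R` is `⋆`-super potent if every maximal `⋆`-ideal is `⋆`-super potent. -/
def SuperPotentDomain (s : StarOp R) : Prop :=
  ∀ M : Ideal R, s.IsMaxStarIdeal M → s.IsSuperPotent M

end StarOp

section TOperation

variable {R : Type*} [CommRing R] [IsDomain R]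

/-- The `v`-operation `J ↦ (J⁻¹)⁻¹` on fractional ideals. -/
noncomputable def vOp (J : FracId R) : FracId R :=
  (1 : FracId R) / ((1 : FracId R) / J)

/-- The `t`-closure of a fractional ideal: the union of `J^v` over all nonzero finitely
generated subideals `J` (realized as a submodule of the fraction field). -/
noncomputable def tOp (I : FracId R) : Submodule R (FractionRing R) :=
  ⨆ J ∈ {J : FracId R | J ≠ 0 ∧ (J : Submodule R (FractionRing R)).FG ∧ J ≤ I},
    ((vOp J : FracId R) : Submodule R (FractionRing R))

/-- A (nonzero integral) `t`-ideal. -/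
def IsTIdeal (I : Ideal R) : Prop :=
  I ≠ ⊥ ∧ tOp (I : FracId R) = ((I : FracId R) : Submodule R (FractionRing R))

/-- A maximal `t`-ideal: maximal among proper integral `t`-ideals. -/
def IsMaxTIdeal (M : Ideal R) : Prop :=
  M ≠ ⊤ ∧ IsTIdeal M ∧ ∀ J : Ideal R, J ≠ ⊤ → IsTIdeal J → M ≤ J → J = M

/-- A nonzero ideal `I` is `t`-invertible if `(I·I⁻¹)^t = R`. -/
def IsTInvertible (I : Ideal R) : Prop :=
  I ≠ ⊥ ∧ tOp ((I : FracId R) * ((1 : FracId R) / (I : FracId R))) =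
    ((1 : FracId R) : Submodule R (FractionRing R))

/-- A nonzero finitely generated ideal is `t`-rigid if it is contained in exactly one maximal
`t`-ideal. -/
def IsTRigid (I : Ideal R) : Prop :=
  I ≠ ⊥ ∧ I.FG ∧ ∃! M : Ideal R, IsMaxTIdeal M ∧ I ≤ M

/-- A `t`-rigid ideal is `t`-super rigid if every finitely generated ideal containing it is
`t`-invertible. -/
def IsTSuperRigid (I : Ideal R) : Prop :=
  IsTRigid I ∧ ∀ J : Ideal R, J.FG → I ≤ J → IsTInvertible J

/-- A maximal `t`-ideal is `t`-potent if it contains a `t`-rigid ideal. -/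
def IsTPotent (M : Ideal R) : Prop :=
  IsMaxTIdeal M ∧ ∃ I : Ideal R, IsTRigid I ∧ I ≤ M

/-- A maximal `t`-ideal is `t`-super potent if it contains a `t`-super rigid ideal. -/
def IsTSuperPotent (M : Ideal R) : Prop :=
  IsMaxTIdeal M ∧ ∃ I : Ideal R, IsTSuperRigid I ∧ I ≤ M

end TOperation

/-- `R` is `t`-potent if every maximal `t`-ideal is `t`-potent. -/
def TPotentDomain (R : Type*) [CommRing R] [IsDomain R] : Prop :=
  ∀ M : Ideal R, IsMaxTIdeal M → IsTPotent M

/-- `R` is `t`-super potent if every maximal `t`-ideal is `t`-super potent. -/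
def TSuperPotentDomain (R : Type*) [CommRing R] [IsDomain R] : Prop :=
  ∀ M : Ideal R, IsMaxTIdeal M → IsTSuperPotent M

/-- An ideal is invertible if `I·I⁻¹ = R` (as fractional ideals). -/
def IsInvertibleIdeal {R : Type*} [CommRing R] [IsDomain R] (I : Ideal R) : Prop :=
  I ≠ ⊥ ∧ (I : FracId R) * ((1 : FracId R) / (I : FracId R)) = 1

/-- An ideal `M` is `d`-super potent if it contains a nonzero finitely generated ideal `I`
such that every finitely generated ideal containing `I` is invertible. -/
def IsDSuperPotent {R : Type*} [CommRing R] [IsDomain R] (M : Ideal R) : Prop :=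
  ∃ I : Ideal R, I ≠ ⊥ ∧ I.FG ∧ I ≤ M ∧ ∀ J : Ideal R, J.FG → I ≤ J → IsInvertibleIdeal J

/-- An ideal `P` is divided (`P = P R_P`): every `x ∈ P` is divisible, within `P`, by every
`s ∉ P`. -/
def IsDividedIdeal {R : Type*} [CommRing R] (P : Ideal R) : Prop :=
  ∀ x ∈ P, ∀ s ∉ P, ∃ y ∈ P, x = s * y

/-- A divided prime ideal. -/
def IsDividedPrime {R : Type*} [CommRing R] (P : Ideal R) : Prop :=
  P.IsPrime ∧ IsDividedIdeal P

/-- A valuation domain: an integral domain in which, for any two elements, one divides the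
other (equivalently, the ideals are totally ordered by inclusion). -/
def IsValuationDomain (A : Type*) [CommRing A] : Prop :=
  IsDomain A ∧ ∀ a b : A, a ∣ b ∨ b ∣ a

/-- A height-one prime: a nonzero prime ideal such that the only prime strictly below it
is `(0)`. -/
def HeightOnePrime {R : Type*} [CommRing R] (P : Ideal R) : Prop :=
  P.IsPrime ∧ P ≠ ⊥ ∧ ∀ Q : Ideal R, Q.IsPrime → Q < P → Q = ⊥

/-- `R` has `t`-dimension one: every maximal `t`-ideal has height one. -/
def TDimensionOne (R : Type*) [CommRing R] [IsDomain R] : Prop :=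
  ∀ M : Ideal R, IsMaxTIdeal M → HeightOnePrime M

/-- `R` is completely integrally closed: if `a ∈ R` is nonzero, `u` is in the fraction field,
and `a·uⁿ ∈ R` for all `n ≥ 1`, then `u ∈ R`. -/
def CompletelyIntegrallyClosed (R : Type*) [CommRing R] [IsDomain R] : Prop :=
  ∀ (a : R) (u : FractionRing R), a ≠ 0 →
    (∀ n : ℕ, 0 < n → ∃ r : R, algebraMap R (FractionRing R) a * u ^ n =
      algebraMap R (FractionRing R) r) →
    ∃ r : R, algebraMap R (FractionRing R) r = u

/-- A Prüfer `v`-multiplication domain: every nonzero finitely generated ideal is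
`t`-invertible. -/
def IsPvMD (R : Type*) [CommRing R] [IsDomain R] : Prop :=
  ∀ I : Ideal R, I ≠ ⊥ → I.FG → IsTInvertible I

/-- `x` (in the fraction field) belongs to the localization `R_P`, i.e. `x = r/s` with
`s ∉ P`. -/
def MemLocalizationAt {R : Type*} [CommRing R] [IsDomain R] (P : Ideal R)
    (x : FractionRing R) : Prop :=
  ∃ r s : R, s ∉ P ∧ algebraMap R (FractionRing R) s * x = algebraMap R (FractionRing R) r

/-- An essential domain: `R` is an intersection (inside its fraction field) of localizations
at primes which are valuation domains. -/
def EssentialDomain (R : Type*) [CommRing R] [IsDomain R] : Prop :=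
  ∃ 𝓟 : Set (Ideal R),
    (∀ P ∈ 𝓟, ∃ hP : P.IsPrime,
      IsValuationDomain (Localization (@Ideal.primeCompl R _ P hP))) ∧
    (∀ x : FractionRing R, (∀ P ∈ 𝓟, MemLocalizationAt P x) ↔
      ∃ r : R, algebraMap R (FractionRing R) r = x)

/-- A generalized Krull domain: `R` is a locally finite intersection of essential rank-one
(height-one) valuation localizations. -/
def GeneralizedKrullDomain (R : Type*) [CommRing R] [IsDomain R] : Prop :=
  ∃ 𝓟 : Set (Ideal R),
    (∀ P ∈ 𝓟, ∃ hP : P.IsPrime, HeightOnePrime P ∧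
      IsValuationDomain (Localization (@Ideal.primeCompl R _ P hP))) ∧
    (∀ x : FractionRing R, (∀ P ∈ 𝓟, MemLocalizationAt P x) ↔
      ∃ r : R, algebraMap R (FractionRing R) r = x) ∧
    (∀ a : R, a ≠ 0 → {P : Ideal R | P ∈ 𝓟 ∧ a ∈ P}.Finite)


section Aux

open FractionalIdeal

variable {R : Type*} [CommRing R] [IsDomain R]

namespace StarOpAux

theorem mem_of_le {X Y : FracId R} (h : X ≤ Y) {x : FractionRing R} (hx : x ∈ X) : x ∈ Y := by
  rw [← FractionalIdeal.coe_le_coe] at h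
  exact h hx

theorem le_of_mem_imp {X Y : FracId R} (h : ∀ x : FractionRing R, x ∈ X → x ∈ Y) : X ≤ Y := by
  rw [← FractionalIdeal.coe_le_coe]
  intro x hx
  exact h x hx

theorem fmul_ne_zero {X Y : FracId R} (hX : X ≠ 0) (hY : Y ≠ 0) : X * Y ≠ 0 := by
  obtain ⟨x, hx0, hx⟩ := exists_ne_zero_mem_isInteger hX
  obtain ⟨y, hy0, hy⟩ := exists_ne_zero_mem_isInteger hY
  intro h
  have hmem : algebraMap R (FractionRing R) x * algebraMap R (FractionRing R) y ∈ X * Y :=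
    FractionalIdeal.mul_mem_mul hx hy
  rw [h, FractionalIdeal.mem_zero_iff] at hmem
  exact mul_ne_zero
    ((map_ne_zero_iff _ (IsFractionRing.injective R (FractionRing R))).2 hx0)
    ((map_ne_zero_iff _ (IsFractionRing.injective R (FractionRing R))).2 hy0) hmem

theorem fpow_ne_zero {X : FracId R} (hX : X ≠ 0) : ∀ n : ℕ, X ^ (n + 1) ≠ 0
  | 0 => by simpa using hX
  | (n+1) => by rw [pow_succ]; exact fmul_ne_zero (fpow_ne_zero hX n) hX

theorem star_ne_zero (s : StarOp R) {X : FracId R} (hX : X ≠ 0) : s.star X ≠ 0 := by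
  intro h
  exact hX (le_antisymm (le_of_le_of_eq (s.le_star X hX) h) (zero_le _))

theorem star_le_one (s : StarOp R) {X : FracId R} (hX : X ≠ 0) (h1 : X ≤ 1) :
    s.star X ≤ 1 := by
  have h := s.star_mono X 1 hX one_ne_zero h1
  rwa [s.star_one] at h

theorem one_le_one_div {X : FracId R} (hX : X ≠ 0) (h1 : X ≤ 1) :
    (1 : FracId R) ≤ 1 / X := by
  rw [FractionalIdeal.le_div_iff_mul_le hX, one_mul]
  exact h1

theorem one_div_ne_zero' {X : FracId R} (hX : X ≠ 0) (h1 : X ≤ 1) :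
    (1 : FracId R) / X ≠ 0 := by
  intro h
  have h2 := one_le_one_div hX h1
  rw [h] at h2
  have : (1 : FracId R) = 0 := le_antisymm h2 (zero_le _)
  exact one_ne_zero this

theorem star_mul_le (s : StarOp R) {X Y : FracId R} (hX : X ≠ 0) (hY : Y ≠ 0) :
    X * s.star Y ≤ s.star (X * Y) := by
  rw [FractionalIdeal.mul_le]
  intro i hi j hj
  rcases eq_or_ne i 0 with rfl | hi0
  · rw [zero_mul]
    exact FractionalIdeal.zero_mem _
  · have h1 : i * j ∈ spanSingleton (nonZeroDivisors R) i * s.star Y :=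
      FractionalIdeal.mem_singleton_mul.2 ⟨j, hj, rfl⟩
    rw [← s.star_smul i hi0 Y hY] at h1
    have h3 : spanSingleton (nonZeroDivisors R) i * Y ≤ X * Y :=
      mul_left_mono (a := Y) (FractionalIdeal.spanSingleton_le_iff_mem.2 hi)
    exact mem_of_le (s.star_mono _ _
      (fmul_ne_zero (by rwa [Ne, FractionalIdeal.spanSingleton_eq_zero_iff]) hY)
      (fmul_ne_zero hX hY) h3) h1

theorem star_mul_star (s : StarOp R) {X Y : FracId R} (hX : X ≠ 0) (hY : Y ≠ 0) :
    s.star (X * s.star Y) = s.star (X * Y) := by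
  refine le_antisymm ?_ ?_
  · have h := s.star_mono _ _ (fmul_ne_zero hX (star_ne_zero s hY))
      (star_ne_zero s (fmul_ne_zero hX hY)) (star_mul_le s hX hY)
    rwa [s.star_idem _ (fmul_ne_zero hX hY)] at h
  · exact s.star_mono _ _ (fmul_ne_zero hX hY) (fmul_ne_zero hX (star_ne_zero s hY))
      (mul_right_mono (a := X) (s.le_star Y hY))

theorem star_mul_star' (s : StarOp R) {X Y : FracId R} (hX : X ≠ 0) (hY : Y ≠ 0) :
    s.star (s.star X * Y) = s.star (X * Y) := by
  rw [mul_comm (s.star X) Y, mul_comm X Y]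
  exact star_mul_star s hY hX

/-- Zorn: every proper star ideal lies under a maximal star ideal. -/
theorem exists_max (s : StarOp R) (hft : s.FiniteType) (T : Ideal R)
    (hT : s.IsStarIdeal T) (hTt : T ≠ ⊤) :
    ∃ N : Ideal R, s.IsMaxStarIdeal N ∧ T ≤ N := by
  classical
  set S : Set (Ideal R) := {J | T ≤ J ∧ J ≠ ⊤ ∧ s.IsStarIdeal J} with hS
  have hTS : T ∈ S := ⟨le_rfl, hTt, hT⟩
  have hbound : ∀ c ⊆ S, IsChain (· ≤ ·) c → ∀ y ∈ c, ∃ ub ∈ S, ∀ z ∈ c, z ≤ ub := by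
    intro c hcS hchain y hy
    have hdir : DirectedOn (· ≤ ·) c := hchain.directedOn
    have hne : c.Nonempty := ⟨y, hy⟩
    have hTsup : T ≤ sSup c := (hcS hy).1.trans (le_sSup hy)
    have hbot : sSup c ≠ ⊥ := fun hb => hT.1 (le_bot_iff.1 (hb ▸ hTsup))
    have hUc0 : ((sSup c : Ideal R) : FracId R) ≠ 0 := coeIdeal_ne_zero.2 hbot
    refine ⟨sSup c, ⟨hTsup, ?_, hbot, ?_⟩, fun z hz => le_sSup hz⟩
    · intro htop
      have h1 : (1 : R) ∈ sSup c := htop ▸ Submodule.mem_top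
      obtain ⟨z, hzc, hz1⟩ := (Submodule.mem_sSup_of_directed hne hdir).1 h1
      exact (hcS hzc).2.1 ((Ideal.eq_top_iff_one z).2 hz1)
    · -- star closed
      refine le_antisymm ?_ (s.le_star _ hUc0)
      refine le_of_mem_imp ?_
      intro x hx
      obtain ⟨W, hW0, hWfg, hWle, hxW⟩ := (hft _ hUc0 x).1 hx
      obtain ⟨G, hG⟩ := hWfg
      have hGmem : ∀ g ∈ G, g ∈ ((sSup c : Ideal R) : FracId R) := by
        intro g hg
        refine mem_of_le hWle ?_
        rw [← FractionalIdeal.mem_coe, ← hG]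
        exact Submodule.subset_span hg
      have hKexG : ∀ G' : Finset (FractionRing R),
          (∀ g ∈ G', g ∈ ((sSup c : Ideal R) : FracId R)) →
          ∃ Kc ∈ c, ∀ g ∈ G', g ∈ ((Kc : Ideal R) : FracId R) := by
        classical
        intro G'
        induction G' using Finset.induction_on with
        | empty => exact fun _ => ⟨y, hy, by simp⟩
        | @insert g G hgG ih =>
          intro hGmem
          obtain ⟨K1, hK1c, hK1⟩ := ih (fun g' hg' => hGmem g' (Finset.mem_insert_of_mem hg'))
          have hg' : g ∈ ((sSup c : Ideal R) : FracId R) := hGmem g (Finset.mem_insert_self g G)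
          rw [FractionalIdeal.mem_coeIdeal] at hg'
          obtain ⟨r, hr, hrg⟩ := hg'
          obtain ⟨K2, hK2c, hrK2⟩ := (Submodule.mem_sSup_of_directed hne hdir).1 hr
          rcases hchain.total hK1c hK2c with h12 | h21
          · refine ⟨K2, hK2c, ?_⟩
            intro g' hg'
            rcases Finset.mem_insert.1 hg' with rfl | hg''
            · exact (FractionalIdeal.mem_coeIdeal _).2 ⟨r, hrK2, hrg⟩
            · exact mem_of_le ((coeIdeal_le_coeIdeal _).2 h12) (hK1 g' hg'')
          · refine ⟨K1, hK1c, ?_⟩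
            intro g' hg'
            rcases Finset.mem_insert.1 hg' with rfl | hg''
            · exact (FractionalIdeal.mem_coeIdeal _).2 ⟨r, h21 hrK2, hrg⟩
            · exact hK1 g' hg''
      obtain ⟨Kc, hKcc, hKcmem⟩ := hKexG G hGmem
      have hWK : W ≤ ((Kc : Ideal R) : FracId R) := by
        rw [← FractionalIdeal.coe_le_coe, ← hG, Submodule.span_le]
        intro g hg
        rw [SetLike.mem_coe, FractionalIdeal.mem_coe]
        exact hKcmem g hg
      have hKc0 : ((Kc : Ideal R) : FracId R) ≠ 0 := by
        refine coeIdeal_ne_zero.2 ?_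
        intro hb
        exact hT.1 (le_bot_iff.1 (hb ▸ (hcS hKcc).1))
      have hx2 := mem_of_le (s.star_mono _ _ hW0 hKc0 hWK) hxW
      rw [(hcS hKcc).2.2.2] at hx2
      exact mem_of_le ((coeIdeal_le_coeIdeal _).2 (le_sSup hKcc)) hx2
  obtain ⟨N, hTN, hNmax⟩ := zorn_le_nonempty₀ S hbound T hTS
  refine ⟨N, ⟨hNmax.1.2.1, hNmax.1.2.2, ?_⟩, hNmax.1.1⟩
  intro J hJt hJstar hNJ
  exact le_antisymm (hNmax.2 ⟨hNmax.1.1.trans hNJ, hJt, hJstar⟩ hNJ) hNJ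

/-- Maximal star ideals are prime. -/
theorem maxStar_prime (s : StarOp R) {N : Ideal R} (hN : s.IsMaxStarIdeal N) : N.IsPrime := by
  rw [Ideal.isPrime_iff]
  refine ⟨hN.1, @fun a b hab => ?_⟩
  by_contra hcon
  push_neg at hcon
  obtain ⟨ha, hb⟩ := hcon
  have hN0 : N ≠ ⊥ := hN.2.1.1
  have hNc0 : ((N : Ideal R) : FracId R) ≠ 0 := coeIdeal_ne_zero.2 hN0
  have hb0 : b ≠ 0 := fun h => hb (h ▸ N.zero_mem)
  have hbK0 : algebraMap R (FractionRing R) b ≠ 0 :=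
    (map_ne_zero_iff _ (IsFractionRing.injective R (FractionRing R))).2 hb0
  set X : FracId R := ((Ideal.span {a} ⊔ N : Ideal R) : FracId R) with hXdef
  have hX0 : X ≠ 0 := coeIdeal_ne_zero.2 (fun h => hN0 (le_bot_iff.1 (h ▸ le_sup_right)))
  have hX1 : s.star X = 1 := by
    have hXle1 : s.star X ≤ 1 := star_le_one s hX0 coeIdeal_le_one
    obtain ⟨J0, hJ0⟩ := le_one_iff_exists_coeIdeal.1 hXle1
    by_cases hJt : J0 = ⊤
    · rw [← hJ0, hJt, coeIdeal_top]
    · exfalso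
      have hJ0star : s.IsStarIdeal J0 := by
        refine ⟨?_, ?_⟩
        · intro hbJ
          exact star_ne_zero s hX0 (by rw [← hJ0, hbJ]; exact coeIdeal_eq_zero.2 rfl)
        · rw [hJ0]
          exact s.star_idem X hX0
      have hNJ : N ≤ J0 := by
        rw [← coeIdeal_le_coeIdeal (FractionRing R), hJ0]
        exact le_trans ((coeIdeal_le_coeIdeal _).2 le_sup_right) (s.le_star X hX0)
      have hJN : J0 = N := hN.2.2 J0 hJt hJ0star hNJ
      have haX : algebraMap R (FractionRing R) a ∈ s.star X := by
        refine mem_of_le (s.le_star X hX0) ?_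
        exact (FractionalIdeal.mem_coeIdeal _).2
          ⟨a, (le_sup_left : Ideal.span {a} ≤ _) (Ideal.subset_span rfl), rfl⟩
      rw [← hJ0] at haX
      rw [FractionalIdeal.mem_coeIdeal] at haX
      obtain ⟨a', ha', haa⟩ := haX
      have haa' : a' = a := IsFractionRing.injective R (FractionRing R) haa
      exact ha (hJN ▸ (haa' ▸ ha'))
  have h3 : spanSingleton (nonZeroDivisors R) (algebraMap R (FractionRing R) b) * X
      ≤ ((N : Ideal R) : FracId R) := by
    rw [hXdef, ← coeIdeal_span_singleton, ← coeIdeal_mul]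
    refine (coeIdeal_le_coeIdeal _).2 ?_
    rw [Ideal.mul_sup]
    refine sup_le ?_ Ideal.mul_le_right
    rw [Ideal.span_singleton_mul_span_singleton, Ideal.span_le]
    intro z hz
    rw [Set.mem_singleton_iff] at hz
    subst hz
    rw [SetLike.mem_coe, mul_comm]
    exact hab
  have h2 : s.star (spanSingleton (nonZeroDivisors R) (algebraMap R (FractionRing R) b) * X)
      = spanSingleton (nonZeroDivisors R) (algebraMap R (FractionRing R) b) := by
    rw [s.star_smul _ hbK0 X hX0, hX1, mul_one]
  have h4 := s.star_mono _ _
    (fmul_ne_zero (by rwa [Ne, FractionalIdeal.spanSingleton_eq_zero_iff]) hX0) hNc0 h3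
  rw [h2, hN.2.1.2] at h4
  have h5 := FractionalIdeal.spanSingleton_le_iff_mem.1 h4
  rw [FractionalIdeal.mem_coeIdeal] at h5
  obtain ⟨b', hb', hbb⟩ := h5
  exact hb ((IsFractionRing.injective R (FractionRing R) hbb) ▸ hb')

/-- Invertibility transfers along equal star closures with invertible product. -/
theorem starInv_of_eq (s : StarOp R) {J B C : Ideal R} (hJ0 : J ≠ ⊥)
    (hB : s.IsStarInvertible B) (hC : s.IsStarInvertible C)
    (h : s.star (J : FracId R) = s.star ((B : FracId R) * (C : FracId R))) :
    s.IsStarInvertible J := by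
  have hJc0 : (J : FracId R) ≠ 0 := coeIdeal_ne_zero.2 hJ0
  have hBc0 : (B : FracId R) ≠ 0 := coeIdeal_ne_zero.2 hB.1
  have hCc0 : (C : FracId R) ≠ 0 := coeIdeal_ne_zero.2 hC.1
  have hDB0 : (1 : FracId R) / (B : FracId R) ≠ 0 := one_div_ne_zero' hBc0 coeIdeal_le_one
  have hDC0 : (1 : FracId R) / (C : FracId R) ≠ 0 := one_div_ne_zero' hCc0 coeIdeal_le_one
  have hDJ0 : (1 : FracId R) / (J : FracId R) ≠ 0 := one_div_ne_zero' hJc0 coeIdeal_le_one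
  have hBC0 : (B : FracId R) * (C : FracId R) ≠ 0 := fmul_ne_zero hBc0 hCc0
  set X : FracId R := (1 / (B : FracId R)) * (1 / (C : FracId R)) with hXdef
  have hX0 : X ≠ 0 := fmul_ne_zero hDB0 hDC0
  have hJX0 : (J : FracId R) * X ≠ 0 := fmul_ne_zero hJc0 hX0
  refine ⟨hJ0, le_antisymm ?_ ?_⟩
  · exact star_le_one s (fmul_ne_zero hJc0 hDJ0) mul_one_div_le_one
  · have e1 : s.star ((J : FracId R) * X) = 1 := by
      calc s.star ((J : FracId R) * X)
          = s.star (s.star (J : FracId R) * X) := (star_mul_star' s hJc0 hX0).symm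
        _ = s.star (s.star ((B:FracId R) * (C:FracId R)) * X) := by rw [h]
        _ = s.star (((B:FracId R) * (C:FracId R)) * X) := star_mul_star' s hBC0 hX0
        _ = s.star (((B:FracId R) * (1/(B:FracId R))) * ((C:FracId R) * (1/(C:FracId R)))) := by
            rw [show ((B:FracId R) * (C:FracId R)) * X
              = ((B:FracId R) * (1/(B:FracId R))) * ((C:FracId R) * (1/(C:FracId R))) from by
              rw [hXdef]; ring]
        _ = s.star (s.star ((B:FracId R) * (1/(B:FracId R))) *
              ((C:FracId R) * (1/(C:FracId R)))) :=
            (star_mul_star' s (fmul_ne_zero hBc0 hDB0) (fmul_ne_zero hCc0 hDC0)).symm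
        _ = s.star (1 * ((C:FracId R) * (1/(C:FracId R)))) := by rw [hB.2]
        _ = 1 := by rw [one_mul, hC.2]
    have h1 : X ≤ 1 / (J : FracId R) := by
      rw [FractionalIdeal.le_div_iff_mul_le hJc0]
      calc X * (J : FracId R) ≤ X * s.star (J : FracId R) :=
            mul_right_mono (a := X) (s.le_star _ hJc0)
        _ = X * s.star ((B:FracId R) * (C:FracId R)) := by rw [h]
        _ ≤ s.star (X * ((B:FracId R) * (C:FracId R))) := star_mul_le s hX0 hBC0
        _ ≤ s.star 1 := by
            refine s.star_mono _ _ (fmul_ne_zero hX0 hBC0) one_ne_zero ?_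
            calc X * ((B:FracId R) * (C:FracId R))
                = ((B:FracId R) * (1/(B:FracId R))) * ((C:FracId R) * (1/(C:FracId R))) := by
                  rw [hXdef]; ring
              _ ≤ 1 * ((C:FracId R) * (1/(C:FracId R))) :=
                  mul_left_mono (a := _) mul_one_div_le_one
              _ = (C:FracId R) * (1/(C:FracId R)) := one_mul _
              _ ≤ 1 := mul_one_div_le_one
        _ = 1 := s.star_one
    calc (1 : FracId R) = s.star ((J : FracId R) * X) := e1.symm
      _ ≤ s.star ((J:FracId R) * ((1:FracId R)/(J:FracId R))) :=
          s.star_mono _ _ hJX0 (fmul_ne_zero hJc0 hDJ0) (mul_right_mono (a := _) h1)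

/-- Extracting a finite subset witnessing membership in a product of submodules. -/
theorem exists_finset_of_le_mul {A T : Submodule R (FractionRing R)}
    (G : Finset (FractionRing R)) (h : ∀ g ∈ G, g ∈ A * T) :
    ∃ Sf : Finset (FractionRing R), (↑Sf : Set (FractionRing R)) ⊆ T ∧
      ∀ g ∈ G, g ∈ A * Submodule.span R (↑Sf : Set (FractionRing R)) := by
  classical
  have key : ∀ w ∈ A * T, ∃ Sf : Finset (FractionRing R),
      (↑Sf : Set (FractionRing R)) ⊆ T ∧
      w ∈ A * Submodule.span R (↑Sf : Set (FractionRing R)) := by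
    intro w hw
    refine Submodule.mul_induction_on hw ?_ ?_
    · intro m hm t ht
      refine ⟨{t}, by simpa using ht, ?_⟩
      exact Submodule.mul_mem_mul hm (Submodule.subset_span (by simp))
    · rintro x y ⟨S1, hS1, hx⟩ ⟨S2, hS2, hy⟩
      refine ⟨S1 ∪ S2, ?_, ?_⟩
      · intro t ht
        rcases Finset.mem_union.1 ht with h' | h'
        · exact hS1 h'
        · exact hS2 h'
      · refine Submodule.add_mem _ ?_ ?_
        · exact mul_le_mul' le_rfl
            (Submodule.span_mono (by intro t ht; exact Finset.mem_union_left _ ht)) hx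
        · exact mul_le_mul' le_rfl
            (Submodule.span_mono (by intro t ht; exact Finset.mem_union_right _ ht)) hy
  induction G using Finset.induction_on with
  | empty => exact ⟨∅, by simp, by simp⟩
  | @insert g G hgG ih =>
    obtain ⟨S1, hS1, hmem1⟩ := ih (fun g' hg' => h g' (Finset.mem_insert_of_mem hg'))
    obtain ⟨S2, hS2, hmem2⟩ := key g (h g (Finset.mem_insert_self g G))
    refine ⟨S1 ∪ S2, ?_, ?_⟩
    · intro t ht
      rcases Finset.mem_union.1 ht with h' | h'
      · exact hS1 h'
      · exact hS2 h'
    · intro g' hg'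
      rcases Finset.mem_insert.1 hg' with rfl | hg''
      · exact mul_le_mul' le_rfl
          (Submodule.span_mono (by intro t ht; exact Finset.mem_union_right _ ht)) hmem2
      · exact mul_le_mul' le_rfl
          (Submodule.span_mono (by intro t ht; exact Finset.mem_union_left _ ht)) (hmem1 g' hg'')

/-- Every finitely generated ideal containing a power of a super rigid ideal is
star-invertible. -/
theorem pow_invertible (s : StarOp R) (hft : s.FiniteType) {I : Ideal R}
    (hI : s.IsSuperRigid I) :
    ∀ (n : ℕ) (J : Ideal R), J.FG → I ^ (n + 1) ≤ J → s.IsStarInvertible J := by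
  classical
  have hI0 : I ≠ ⊥ := hI.1.1
  have hIfg : I.FG := hI.1.2.1
  have hIc0 : (I : FracId R) ≠ 0 := coeIdeal_ne_zero.2 hI0
  have hpow0 : ∀ j : ℕ, I ^ (j+1) ≠ ⊥ := by
    intro j hb
    have h2 : ((I ^ (j+1) : Ideal R) : FracId R) = 0 := coeIdeal_eq_zero.2 hb
    rw [coeIdeal_pow] at h2
    exact fpow_ne_zero hIc0 j h2
  intro n
  induction n with
  | zero =>
    intro J hJfg hle
    exact hI.2 J hJfg (by simpa using hle)
  | succ n ih =>
    intro J hJfg hle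
    have hJ0 : J ≠ ⊥ := fun h => hpow0 (n+1) (le_bot_iff.1 (h ▸ hle))
    have hJc0 : (J : FracId R) ≠ 0 := coeIdeal_ne_zero.2 hJ0
    set K : Ideal R := J ⊔ I ^ (n + 1) with hKdef
    have hKfg : K.FG := Submodule.FG.sup hJfg (Submodule.FG.pow hIfg (n+1))
    have hKinv : s.IsStarInvertible K := ih K hKfg le_sup_right
    have hK0 : K ≠ ⊥ := hKinv.1
    have hKc0 : (K : FracId R) ≠ 0 := coeIdeal_ne_zero.2 hK0
    have hJKc : (J : FracId R) ≤ (K : FracId R) := (coeIdeal_le_coeIdeal _).2 le_sup_left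
    have hIKJ : (I : FracId R) * (K : FracId R) ≤ (J : FracId R) := by
      rw [← coeIdeal_mul]
      refine (coeIdeal_le_coeIdeal _).2 ?_
      rw [hKdef, Ideal.mul_sup]
      refine sup_le Ideal.mul_le_right ?_
      rw [← pow_succ']
      exact hle
    have hD0 : (1 : FracId R) / (K : FracId R) ≠ 0 := one_div_ne_zero' hKc0 coeIdeal_le_one
    have hKD0 : (K : FracId R) * (1 / (K : FracId R)) ≠ 0 := fmul_ne_zero hKc0 hD0
    set T : FracId R := s.star ((J : FracId R) * (1 / (K : FracId R))) with hTdef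
    have hJD0 : (J : FracId R) * (1 / (K : FracId R)) ≠ 0 := fmul_ne_zero hJc0 hD0
    have hT0 : T ≠ 0 := star_ne_zero s hJD0
    have hT1 : T ≤ 1 := by
      refine star_le_one s hJD0 ?_
      calc (J : FracId R) * (1 / (K : FracId R))
          ≤ (K : FracId R) * (1 / (K : FracId R)) := mul_left_mono (a := _) hJKc
        _ ≤ 1 := mul_one_div_le_one
    have hIcT : (I : FracId R) ≤ T := by
      calc (I : FracId R) ≤ s.star (I : FracId R) := s.le_star _ hIc0
        _ = s.star ((I : FracId R) * ((K:FracId R) * (1 / (K : FracId R)))) := by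
            rw [← star_mul_star s hIc0 hKD0, hKinv.2, mul_one]
        _ ≤ T := by
            refine s.star_mono _ _ (fmul_ne_zero hIc0 hKD0) hJD0 ?_
            calc (I : FracId R) * ((K:FracId R) * (1 / (K : FracId R)))
                = ((I:FracId R) * (K:FracId R)) * (1 / (K : FracId R)) := by ring
              _ ≤ (J : FracId R) * (1 / (K : FracId R)) := mul_left_mono (a := _) hIKJ
    have hKT0 : (K : FracId R) * T ≠ 0 := fmul_ne_zero hKc0 hT0
    have hbeta : s.star ((K : FracId R) * T) = s.star (J : FracId R) := by
      calc s.star ((K : FracId R) * T)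
          = s.star ((K : FracId R) * ((J:FracId R) * (1 / (K : FracId R)))) := by
            rw [hTdef]; exact star_mul_star s hKc0 hJD0
        _ = s.star ((J : FracId R) * ((K:FracId R) * (1 / (K : FracId R)))) := by
            rw [mul_left_comm]
        _ = s.star (J : FracId R) := by
            rw [← star_mul_star s hJc0 hKD0, hKinv.2, mul_one]
    obtain ⟨GJ, hGJ⟩ := hJfg
    have hjmem : ∀ j ∈ GJ, ∃ W : FracId R, W ≠ 0 ∧
        (W : Submodule R (FractionRing R)).FG ∧ W ≤ (K : FracId R) * T ∧
        algebraMap R (FractionRing R) j ∈ s.star W := by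
      intro j hj
      have hjJ : algebraMap R (FractionRing R) j ∈ (J : FracId R) :=
        (FractionalIdeal.mem_coeIdeal _).2 ⟨j, hGJ ▸ Ideal.subset_span hj, rfl⟩
      have hjs : algebraMap R (FractionRing R) j ∈ s.star ((K : FracId R) * T) := by
        rw [hbeta]
        exact mem_of_le (s.le_star _ hJc0) hjJ
      exact (hft _ hKT0 _).1 hjs
    choose W hW0 hWfg hWle hjW using hjmem
    have hfin : ∀ j (hj : j ∈ GJ), ∃ Sf : Finset (FractionRing R),
        (↑Sf : Set (FractionRing R)) ⊆ (T : Submodule R (FractionRing R)) ∧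
        (W j hj : Submodule R (FractionRing R)) ≤
          ((K : FracId R) : Submodule R (FractionRing R)) *
            Submodule.span R (↑Sf : Set (FractionRing R)) := by
      intro j hj
      obtain ⟨G, hG⟩ := hWfg j hj
      have hsub : ∀ g ∈ G, g ∈ ((K : FracId R) : Submodule R (FractionRing R)) *
          (T : Submodule R (FractionRing R)) := by
        intro g hg
        have hgW : g ∈ (W j hj : Submodule R (FractionRing R)) := by
          rw [← hG]; exact Submodule.subset_span hg
        have h2 := hWle j hj
        rw [← FractionalIdeal.coe_le_coe, FractionalIdeal.coe_mul] at h2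
        exact h2 hgW
      obtain ⟨Sf, hSf1, hSf2⟩ := exists_finset_of_le_mul G hsub
      refine ⟨Sf, hSf1, ?_⟩
      rw [← hG, Submodule.span_le]
      intro g hg
      exact hSf2 g hg
    choose Sf hSf1 hSf2 using hfin
    set Sall : Finset (FractionRing R) := GJ.attach.biUnion (fun j => Sf j.1 j.2) with hSall
    have hSallT : ∀ t ∈ Sall, t ∈ (T : Submodule R (FractionRing R)) := by
      intro t ht
      obtain ⟨j, hj, htj⟩ := Finset.mem_biUnion.1 ht
      exact hSf1 j.1 j.2 htj
    have hSallR : ∀ t ∈ Sall, ∃ r : R, algebraMap R (FractionRing R) r = t := by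
      intro t ht
      have h1 : t ∈ T := FractionalIdeal.mem_coe.1 (hSallT t ht)
      have h2 : t ∈ (1 : FracId R) := mem_of_le hT1 h1
      rwa [FractionalIdeal.mem_one_iff] at h2
    choose ρ hρ using hSallR
    set rS : Finset R := Sall.attach.image (fun t => ρ t.1 t.2) with hrS
    set C : Ideal R := I ⊔ Ideal.span (↑rS : Set R) with hCdef
    have hCfg : C.FG := Submodule.FG.sup hIfg (Submodule.fg_span rS.finite_toSet)
    have hCinv : s.IsStarInvertible C := hI.2 C hCfg le_sup_left
    have hC0 : C ≠ ⊥ := hCinv.1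
    have hCc0 : (C : FracId R) ≠ 0 := coeIdeal_ne_zero.2 hC0
    have hKC0 : (K : FracId R) * (C : FracId R) ≠ 0 := fmul_ne_zero hKc0 hCc0
    have hspanC : Submodule.span R (↑Sall : Set (FractionRing R)) ≤
        ((C : FracId R) : Submodule R (FractionRing R)) := by
      rw [Submodule.span_le]
      intro t ht
      have ht' : t ∈ Sall := ht
      rw [SetLike.mem_coe, FractionalIdeal.mem_coe, FractionalIdeal.mem_coeIdeal]
      refine ⟨ρ t ht', ?_, hρ t ht'⟩
      have hmem : ρ t ht' ∈ rS := Finset.mem_image.2 ⟨⟨t, ht'⟩, Finset.mem_attach _ _, rfl⟩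
      exact (le_sup_right : Ideal.span (↑rS : Set R) ≤ C) (Ideal.subset_span hmem)
    have hspanT : ∀ r ∈ Ideal.span (↑rS : Set R), algebraMap R (FractionRing R) r ∈ T := by
      intro r hr
      have hss : Ideal.span (↑rS : Set R) ≤ Submodule.comap
          (Algebra.linearMap R (FractionRing R)) (T : Submodule R (FractionRing R)) := by
        rw [Ideal.span_le]
        intro z hz
        obtain ⟨⟨t, ht⟩, -, hzt⟩ := Finset.mem_image.1 hz
        rw [SetLike.mem_coe, Submodule.mem_comap, Algebra.linearMap_apply, ← hzt, hρ t ht]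
        exact hSallT t ht
      have h2 := hss hr
      rw [Submodule.mem_comap, Algebra.linearMap_apply] at h2
      exact FractionalIdeal.mem_coe.1 h2
    have hCcT : (C : FracId R) ≤ T := by
      rw [hCdef, coeIdeal_sup, ← sup_eq_add]
      refine sup_le hIcT ?_
      refine le_of_mem_imp ?_
      intro x hx
      rw [FractionalIdeal.mem_coeIdeal] at hx
      obtain ⟨r, hr, rfl⟩ := hx
      exact hspanT r hr
    have hJstar : s.star (J : FracId R) ≤ s.star ((K:FracId R) * (C:FracId R)) := by
      have hgen : ∀ j ∈ GJ, algebraMap R (FractionRing R) j ∈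
          s.star ((K:FracId R) * (C:FracId R)) := by
        intro j hj
        have hWKC : W j hj ≤ (K:FracId R) * (C:FracId R) := by
          rw [← FractionalIdeal.coe_le_coe, FractionalIdeal.coe_mul]
          refine le_trans (hSf2 j hj) ?_
          refine mul_le_mul' le_rfl ?_
          refine le_trans (Submodule.span_mono ?_) hspanC
          intro t ht
          exact Finset.mem_coe.2 (Finset.mem_biUnion.2 ⟨⟨j, hj⟩, Finset.mem_attach _ _, ht⟩)
        exact mem_of_le (s.star_mono _ _ (hW0 j hj) hKC0 hWKC) (hjW j hj)
      have hJle : (J : FracId R) ≤ s.star ((K:FracId R) * (C:FracId R)) := by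
        refine le_of_mem_imp ?_
        intro x hx
        rw [FractionalIdeal.mem_coeIdeal] at hx
        obtain ⟨r, hr, rfl⟩ := hx
        have hss : J ≤ Submodule.comap (Algebra.linearMap R (FractionRing R))
            ((s.star ((K:FracId R) * (C:FracId R)) : FracId R) :
              Submodule R (FractionRing R)) := by
          rw [← hGJ, Ideal.span_le]
          intro z hz
          rw [SetLike.mem_coe, Submodule.mem_comap, Algebra.linearMap_apply]
          exact FractionalIdeal.mem_coe.2 (hgen z hz)
        have h2 := hss hr
        rw [Submodule.mem_comap, Algebra.linearMap_apply] at h2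
        exact FractionalIdeal.mem_coe.1 h2
      have h3 := s.star_mono _ _ hJc0 (star_ne_zero s hKC0) hJle
      rwa [s.star_idem _ hKC0] at h3
    have hKCstar : s.star ((K:FracId R)*(C:FracId R)) ≤ s.star (J:FracId R) := by
      calc s.star ((K:FracId R)*(C:FracId R)) ≤ s.star ((K:FracId R) * T) :=
            s.star_mono _ _ hKC0 hKT0 (mul_right_mono (a := _) hCcT)
        _ = s.star (J : FracId R) := hbeta
    exact starInv_of_eq s hJ0 hKinv hCinv (le_antisymm hJstar hKCstar)

/-- Key homogeneity lemma. -/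
theorem lemQ (s : StarOp R) (hft : s.FiniteType) {I M : Ideal R}
    (hI : s.IsSuperRigid I) (hM : s.IsMaxStarIdeal M) (hIM : I ≤ M)
    (j : ℕ) {x : R}
    (hx : algebraMap R (FractionRing R) x ∉ s.star ((I : FracId R) ^ (j+1))) :
    s.star ((I : FracId R)^(j+1) *
      (1 / ((Ideal.span {x} ⊔ I^(j+1) : Ideal R) : FracId R))) ≤ ((M : Ideal R) : FracId R) := by
  classical
  have hI0 : I ≠ ⊥ := hI.1.1
  have hIc0 : (I : FracId R) ≠ 0 := coeIdeal_ne_zero.2 hI0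
  have hIcj0 : (I : FracId R)^(j+1) ≠ 0 := fpow_ne_zero hIc0 j
  set X0 : Ideal R := Ideal.span {x} ⊔ I^(j+1) with hX0def
  have hX0fg : X0.FG := Submodule.FG.sup (Submodule.fg_span (Set.finite_singleton x))
    (Submodule.FG.pow hI.1.2.1 (j+1))
  have hXinv : s.IsStarInvertible X0 := pow_invertible s hft hI j X0 hX0fg le_sup_right
  have hX00 : X0 ≠ ⊥ := hXinv.1
  have hXc0 : (X0 : FracId R) ≠ 0 := coeIdeal_ne_zero.2 hX00
  have hIX : (I : FracId R)^(j+1) ≤ (X0 : FracId R) := by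
    rw [← coeIdeal_pow]
    exact (coeIdeal_le_coeIdeal _).2 le_sup_right
  have hD0 : (1:FracId R) / (X0 : FracId R) ≠ 0 := one_div_ne_zero' hXc0 coeIdeal_le_one
  have hXD0 : (X0 : FracId R) * (1 / (X0 : FracId R)) ≠ 0 := fmul_ne_zero hXc0 hD0
  set Y : FracId R := (I : FracId R)^(j+1) * (1 / (X0 : FracId R)) with hYdef
  have hY0 : Y ≠ 0 := fmul_ne_zero hIcj0 hD0
  have hY1 : Y ≤ 1 := le_trans (mul_left_mono (a := _) hIX) mul_one_div_le_one
  have e2 : s.star ((X0 : FracId R) * Y) = s.star ((I : FracId R)^(j+1)) := by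
    rw [hYdef, mul_left_comm, ← star_mul_star s hIcj0 hXD0, hXinv.2, mul_one]
  set T : FracId R := s.star Y with hTdef
  have hT0 : T ≠ 0 := star_ne_zero s hY0
  have hT1 : T ≤ 1 := star_le_one s hY0 hY1
  by_cases hTop : T = 1
  · exfalso
    apply hx
    have hxX : algebraMap R (FractionRing R) x ∈ (X0 : FracId R) :=
      (FractionalIdeal.mem_coeIdeal _).2
        ⟨x, (le_sup_left : Ideal.span {x} ≤ X0) (Ideal.subset_span rfl), rfl⟩
    have e : s.star (X0 : FracId R) = s.star ((I : FracId R)^(j+1)) := by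
      calc s.star (X0 : FracId R) = s.star ((X0 : FracId R) * T) := by rw [hTop, mul_one]
        _ = s.star ((X0 : FracId R) * Y) := by rw [hTdef]; exact star_mul_star s hXc0 hY0
        _ = s.star ((I : FracId R)^(j+1)) := e2
    exact e ▸ (mem_of_le (s.le_star _ hXc0) hxX)
  · obtain ⟨T0, hT0eq⟩ := le_one_iff_exists_coeIdeal.1 hT1
    have hT00 : T0 ≠ ⊥ := by
      intro hb
      exact hT0 (by rw [← hT0eq, hb]; exact coeIdeal_eq_zero.2 rfl)
    have hT0star : s.IsStarIdeal T0 := ⟨hT00, by rw [hT0eq, hTdef]; exact s.star_idem Y hY0⟩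
    have hT0top : T0 ≠ ⊤ := by
      intro htop
      exact hTop (by rw [← hT0eq, htop, coeIdeal_top])
    obtain ⟨N, hN, hTN⟩ := exists_max s hft T0 hT0star hT0top
    have hN0 : N ≠ ⊥ := hN.2.1.1
    have hNc0 : ((N : Ideal R) : FracId R) ≠ 0 := coeIdeal_ne_zero.2 hN0
    have hXT : (X0 : FracId R) * T ≤ ((N : Ideal R) : FracId R) := by
      calc (X0 : FracId R) * T ≤ 1 * T := mul_left_mono (a := T) coeIdeal_le_one
        _ = T := one_mul T
        _ = (T0 : FracId R) := hT0eq.symm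
        _ ≤ ((N : Ideal R) : FracId R) := (coeIdeal_le_coeIdeal _).2 hTN
    have hIN : I ^ (j+1) ≤ N := by
      have h1 : (I : FracId R)^(j+1) ≤ ((N : Ideal R) : FracId R) := by
        calc (I : FracId R)^(j+1) ≤ s.star ((I : FracId R)^(j+1)) := s.le_star _ hIcj0
          _ = s.star ((X0:FracId R) * Y) := e2.symm
          _ = s.star ((X0:FracId R) * T) := by
              rw [hTdef]; exact (star_mul_star s hXc0 hY0).symm
          _ ≤ s.star ((N : Ideal R) : FracId R) :=
              s.star_mono _ _ (fmul_ne_zero hXc0 hT0) hNc0 hXT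
          _ = ((N : Ideal R) : FracId R) := hN.2.1.2
      rw [← coeIdeal_pow] at h1
      exact (coeIdeal_le_coeIdeal _).1 h1
    have hNp : N.IsPrime := maxStar_prime s hN
    have hIN' : I ≤ N := hNp.le_of_pow_le hIN
    have hNM : N = M := hI.1.2.2.unique ⟨hN, hIN'⟩ ⟨hM, hIM⟩
    calc s.star ((I:FracId R)^(j+1) * (1 / ((X0 : Ideal R) : FracId R)))
        = T := by rw [hTdef, hYdef]
      _ = (T0 : FracId R) := hT0eq.symm
      _ ≤ ((N : Ideal R) : FracId R) := (coeIdeal_le_coeIdeal _).2 hTN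
      _ = ((M : Ideal R) : FracId R) := by rw [hNM]

end StarOpAux

end Aux

/-- If `M` is a `⋆`-super potent maximal `⋆`-ideal (for a finite-type star
operation) and `I ⊆ M` is `⋆`-super rigid, then `⋂_{n≥1} (Iⁿ)⋆` is a prime ideal of `R`. -/
theorem inter_star_powers_prime {R : Type*} [CommRing R] [IsDomain R]
    (s : StarOp R) (hft : s.FiniteType) (M : Ideal R) (hM : s.IsSuperPotent M)
    (I : Ideal R) (hI : s.IsSuperRigid I) (hIM : I ≤ M) :
    Ideal.IsPrime
      ((Submodule.comap (Algebra.linearMap R (FractionRing R))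
        (⨅ n : ℕ, (s.star ((I ^ (n + 1) : Ideal R) : FracId R) :
          Submodule R (FractionRing R)))) : Ideal R) := by
  classical
  open StarOpAux in
  have hM1 : s.IsMaxStarIdeal M := hM.1
  have hI0 : I ≠ ⊥ := hI.1.1
  have hIfg : I.FG := hI.1.2.1
  have hIc0 : (I : FracId R) ≠ 0 := coeIdeal_ne_zero.2 hI0
  have hMne : M ≠ ⊤ := hM1.1
  have hM0 : M ≠ ⊥ := hM1.2.1.1
  have hMc0 : ((M : Ideal R) : FracId R) ≠ 0 := coeIdeal_ne_zero.2 hM0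
  have hMstar : s.star ((M : Ideal R) : FracId R) = ((M : Ideal R) : FracId R) := hM1.2.1.2
  have hinj := IsFractionRing.injective R (FractionRing R)
  have hmem : ∀ x : R, (x ∈ Submodule.comap (Algebra.linearMap R (FractionRing R))
      (⨅ n : ℕ, (s.star ((I ^ (n + 1) : Ideal R) : FracId R) : Submodule R (FractionRing R))))
      ↔ ∀ n : ℕ, algebraMap R (FractionRing R) x ∈ s.star ((I : FracId R) ^ (n+1)) := by
    intro x
    rw [Submodule.mem_comap]
    simp only [Submodule.mem_iInf, FractionalIdeal.mem_coe, Algebra.linearMap_apply,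
      coeIdeal_pow]
  rw [Ideal.isPrime_iff]
  constructor
  · -- not top
    intro htop
    have h0 : (1:R) ∈ Submodule.comap (Algebra.linearMap R (FractionRing R))
        (⨅ n : ℕ, (s.star ((I ^ (n + 1) : Ideal R) : FracId R) :
          Submodule R (FractionRing R))) := by
      rw [htop]; exact Submodule.mem_top
    have h2 : algebraMap R (FractionRing R) 1 ∈ s.star ((I:FracId R)^(0+1)) := (hmem 1).1 h0 0
    rw [pow_one] at h2
    have h3 : s.star (I : FracId R) ≤ ((M : Ideal R) : FracId R) := by
      calc s.star ((I : Ideal R) : FracId R) ≤ s.star ((M : Ideal R) : FracId R) :=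
            s.star_mono _ _ hIc0 hMc0 ((coeIdeal_le_coeIdeal _).2 hIM)
        _ = ((M : Ideal R) : FracId R) := hMstar
    have h4 := mem_of_le h3 h2
    rw [FractionalIdeal.mem_coeIdeal] at h4
    obtain ⟨r, hrM, hr1⟩ := h4
    have hr : r = 1 := hinj hr1
    exact hMne ((Ideal.eq_top_iff_one M).2 (hr ▸ hrM))
  · -- mem or mem
    intro a b hab
    by_contra hcon
    push_neg at hcon
    obtain ⟨ha, hb⟩ := hcon
    have habP : ∀ n : ℕ, algebraMap R (FractionRing R) (a*b) ∈ s.star ((I:FracId R)^(n+1)) :=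
      (hmem (a*b)).1 hab
    have ha' : ∃ m:ℕ, algebraMap R (FractionRing R) a ∉ s.star ((I:FracId R)^(m+1)) := by
      by_contra h
      push_neg at h
      exact ha ((hmem a).2 h)
    have hb' : ∃ k:ℕ, algebraMap R (FractionRing R) b ∉ s.star ((I:FracId R)^(k+1)) := by
      by_contra h
      push_neg at h
      exact hb ((hmem b).2 h)
    obtain ⟨m, ham⟩ := ha'
    obtain ⟨k, hbk⟩ := hb'
    have hQA := lemQ s hft hI hM1 hIM m ham
    have hQB := lemQ s hft hI hM1 hIM k hbk
    set A0 : Ideal R := Ideal.span {a} ⊔ I^(m+1) with hA0def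
    set B0 : Ideal R := Ideal.span {b} ⊔ I^(k+1) with hB0def
    have hA0fg : A0.FG := Submodule.FG.sup (Submodule.fg_span (Set.finite_singleton a))
      (Submodule.FG.pow hIfg (m+1))
    have hB0fg : B0.FG := Submodule.FG.sup (Submodule.fg_span (Set.finite_singleton b))
      (Submodule.FG.pow hIfg (k+1))
    have hAinv : s.IsStarInvertible A0 := pow_invertible s hft hI m A0 hA0fg le_sup_right
    have hBinv : s.IsStarInvertible B0 := pow_invertible s hft hI k B0 hB0fg le_sup_right
    set sa : FracId R := spanSingleton (nonZeroDivisors R) (algebraMap R (FractionRing R) a)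
      with hsadef
    set sb : FracId R := spanSingleton (nonZeroDivisors R) (algebraMap R (FractionRing R) b)
      with hsbdef
    set Am : FracId R := (I:FracId R)^(m+1) with hAmdef
    set Bk : FracId R := (I:FracId R)^(k+1) with hBkdef
    have hAm0 : Am ≠ 0 := fpow_ne_zero hIc0 m
    have hBk0 : Bk ≠ 0 := fpow_ne_zero hIc0 k
    set Ac : FracId R := ((A0 : Ideal R) : FracId R) with hAcdef
    set Bc : FracId R := ((B0 : Ideal R) : FracId R) with hBcdef
    have hAc_eq : Ac = sa + Am := by
      rw [hAcdef, hA0def, coeIdeal_sup, coeIdeal_span_singleton, coeIdeal_pow]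
    have hBc_eq : Bc = sb + Bk := by
      rw [hBcdef, hB0def, coeIdeal_sup, coeIdeal_span_singleton, coeIdeal_pow]
    have hAc0 : Ac ≠ 0 := coeIdeal_ne_zero.2 hAinv.1
    have hBc0 : Bc ≠ 0 := coeIdeal_ne_zero.2 hBinv.1
    have hAc1 : Ac ≤ 1 := coeIdeal_le_one
    have hBc1 : Bc ≤ 1 := coeIdeal_le_one
    have hDA0 : (1:FracId R)/Ac ≠ 0 := one_div_ne_zero' hAc0 hAc1
    have hDB0 : (1:FracId R)/Bc ≠ 0 := one_div_ne_zero' hBc0 hBc1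
    have hsaAc : sa ≤ Ac := by rw [hAc_eq, ← sup_eq_add]; exact le_sup_left
    have hAmAc : Am ≤ Ac := by rw [hAc_eq, ← sup_eq_add]; exact le_sup_right
    have hsbBc : sb ≤ Bc := by rw [hBc_eq, ← sup_eq_add]; exact le_sup_left
    have hBkBc : Bk ≤ Bc := by rw [hBc_eq, ← sup_eq_add]; exact le_sup_right
    set Cf : FracId R := Ac * Bk + Bc * Am with hCfdef
    have hACBk0 : Ac * Bk ≠ 0 := fmul_ne_zero hAc0 hBk0
    have hABkCf : Ac * Bk ≤ Cf := by rw [hCfdef, ← sup_eq_add]; exact le_sup_left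
    have hBAmCf : Bc * Am ≤ Cf := by rw [hCfdef, ← sup_eq_add]; exact le_sup_right
    have hCf0 : Cf ≠ 0 := by
      intro h
      exact hACBk0 (le_antisymm (by rw [← h]; exact hABkCf) (zero_le _))
    have hCAB : Cf ≤ Ac * Bc := by
      rw [hCfdef, ← sup_eq_add]
      refine sup_le (mul_right_mono (a := Ac) hBkBc) ?_
      rw [mul_comm Bc Am]
      exact mul_left_mono (a := Bc) hAmAc
    have hABmul : Ac * Bc ≠ 0 := fmul_ne_zero hAc0 hBc0
    have hsab : spanSingleton (nonZeroDivisors R) (algebraMap R (FractionRing R) (a*b))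
        ≤ s.star ((I:FracId R)^(m+k+1+1)) :=
      FractionalIdeal.spanSingleton_le_iff_mem.2 (habP (m+k+1))
    have hsasb : sa * sb = spanSingleton (nonZeroDivisors R) (algebraMap R (FractionRing R) (a*b)) := by
      rw [hsadef, hsbdef, spanSingleton_mul_spanSingleton, ← _root_.map_mul]
    have hAmBk : Am * Bk = (I:FracId R)^(m+k+1+1) := by
      rw [hAmdef, hBkdef, ← pow_add]
      congr 1
      omega
    have hAmBkCf : Am * Bk ≤ Cf := le_trans (mul_left_mono (a := Bk) hAmAc) hABkCf
    have hstarpow_le : s.star ((I:FracId R)^(m+k+1+1)) ≤ s.star Cf := by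
      rw [← hAmBk]
      exact s.star_mono _ _ (fmul_ne_zero hAm0 hBk0) hCf0 hAmBkCf
    have hC2 : Ac * Bc ≤ s.star Cf := by
      have t1 : sa * sb ≤ s.star Cf := by rw [hsasb]; exact hsab.trans hstarpow_le
      have t2 : sa * Bk ≤ s.star Cf :=
        le_trans (le_trans (mul_left_mono (a := Bk) hsaAc) hABkCf) (s.le_star Cf hCf0)
      have t3 : sb * Am ≤ s.star Cf :=
        le_trans (le_trans (mul_left_mono (a := Am) hsbBc) hBAmCf) (s.le_star Cf hCf0)
      have t4 : Am * Bk ≤ s.star Cf := hAmBkCf.trans (s.le_star Cf hCf0)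
      have hexp : Ac * Bc = sa*sb + sa*Bk + sb*Am + Am*Bk := by
        rw [hAc_eq, hBc_eq]; ring
      rw [hexp, ← sup_eq_add, ← sup_eq_add, ← sup_eq_add]
      exact sup_le (sup_le (sup_le t1 t2) t3) t4
    have hstarC : s.star (Ac * Bc) = s.star Cf := by
      refine le_antisymm ?_ (s.star_mono _ _ hCf0 hABmul hCAB)
      have h2 := s.star_mono _ _ hABmul (star_ne_zero s hCf0) hC2
      rwa [s.star_idem _ hCf0] at h2
    set X : FracId R := (1/Ac) * (1/Bc) with hXdef
    have hX0 : X ≠ 0 := fmul_ne_zero hDA0 hDB0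
    have hAinv2 : s.star (Ac * (1/Ac)) = 1 := hAinv.2
    have hBinv2 : s.star (Bc * (1/Bc)) = 1 := hBinv.2
    have e1 : s.star ((Ac * Bc) * X) = 1 := by
      rw [show (Ac*Bc)*X = (Ac*(1/Ac))*(Bc*(1/Bc)) from by rw [hXdef]; ring]
      calc s.star ((Ac*(1/Ac))*(Bc*(1/Bc)))
          = s.star (s.star (Ac*(1/Ac)) * (Bc*(1/Bc))) :=
            (star_mul_star' s (fmul_ne_zero hAc0 hDA0) (fmul_ne_zero hBc0 hDB0)).symm
        _ = s.star (1 * (Bc*(1/Bc))) := by rw [hAinv2]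
        _ = 1 := by rw [one_mul, hBinv2]
    have e3 : s.star ((Ac*Bc)*X) = s.star (Cf * X) := by
      calc s.star ((Ac*Bc)*X) = s.star (s.star (Ac*Bc) * X) :=
            (star_mul_star' s hABmul hX0).symm
        _ = s.star (s.star Cf * X) := by rw [hstarC]
        _ = s.star (Cf * X) := star_mul_star' s hCf0 hX0
    have hCfXM : Cf * X ≤ ((M : Ideal R) : FracId R) := by
      have hterm1 : (Ac*Bk)*X ≤ ((M : Ideal R) : FracId R) := by
        rw [show (Ac*Bk)*X = (Ac*(1/Ac)) * (Bk*(1/Bc)) from by rw [hXdef]; ring]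
        calc (Ac*(1/Ac)) * (Bk*(1/Bc)) ≤ 1 * (Bk*(1/Bc)) :=
              mul_left_mono (a := _) mul_one_div_le_one
          _ = Bk*(1/Bc) := one_mul _
          _ ≤ s.star (Bk*(1/Bc)) := s.le_star _ (fmul_ne_zero hBk0 hDB0)
          _ ≤ ((M : Ideal R) : FracId R) := hQB
      have hterm2 : (Bc*Am)*X ≤ ((M : Ideal R) : FracId R) := by
        rw [show (Bc*Am)*X = (Bc*(1/Bc)) * (Am*(1/Ac)) from by rw [hXdef]; ring]
        calc (Bc*(1/Bc)) * (Am*(1/Ac)) ≤ 1 * (Am*(1/Ac)) :=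
              mul_left_mono (a := _) mul_one_div_le_one
          _ = Am*(1/Ac) := one_mul _
          _ ≤ s.star (Am*(1/Ac)) := s.le_star _ (fmul_ne_zero hAm0 hDA0)
          _ ≤ ((M : Ideal R) : FracId R) := hQA
      rw [hCfdef, add_mul, ← sup_eq_add]
      exact sup_le hterm1 hterm2
    have hCfX0 : Cf * X ≠ 0 := fmul_ne_zero hCf0 hX0
    have hfinal : (1 : FracId R) ≤ ((M : Ideal R) : FracId R) := by
      calc (1:FracId R) = s.star (Cf * X) := by rw [← e3, e1]
        _ ≤ s.star ((M : Ideal R) : FracId R) := s.star_mono _ _ hCfX0 hMc0 hCfXM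
        _ = ((M : Ideal R) : FracId R) := hMstar
    have h1M : (1 : FractionRing R) ∈ ((M : Ideal R) : FracId R) :=
      mem_of_le hfinal (FractionalIdeal.one_mem_one (nonZeroDivisors R))
    rw [FractionalIdeal.mem_coeIdeal] at h1M
    obtain ⟨r, hrM, hr1⟩ := h1M
    have hr : r = 1 := hinj (by rw [hr1, _root_.map_one])
    exact hMne ((Ideal.eq_top_iff_one M).2 (hr ▸ hrM))
end

section
/- If M is a t-super potent maximal t-ideal of height one in an integral domain R, then the localization R_M is a valuation domain. In particular, a one-dimensional local d-super potent integral domain is a valuation domain. -/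
open FractionalIdeal

/-! ### Auxiliary lemmas for the proof -/

section Helpers

lemma aux_span_triple_principal {A : Type*} [CommRing A] [IsDomain A] [IsLocalRing A] {x y z : A}
    (h : (Ideal.span ({x, y, z} : Set A)).IsPrincipal) :
    Ideal.span ({x, y, z} : Set A) = Ideal.span {x} ∨
    Ideal.span ({x, y, z} : Set A) = Ideal.span {y} ∨
    Ideal.span ({x, y, z} : Set A) = Ideal.span {z} := by
  obtain ⟨c, hc⟩ := h
  have hc' : Ideal.span ({x, y, z} : Set A) = Ideal.span {c} := hc
  have hx : x ∈ Ideal.span ({c} : Set A) := by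
    rw [← hc']; exact Ideal.subset_span (by simp)
  have hy : y ∈ Ideal.span ({c} : Set A) := by
    rw [← hc']; exact Ideal.subset_span (by simp)
  have hz : z ∈ Ideal.span ({c} : Set A) := by
    rw [← hc']; exact Ideal.subset_span (by simp)
  obtain ⟨x₁, hx₁⟩ := Ideal.mem_span_singleton'.1 hx
  obtain ⟨y₁, hy₁⟩ := Ideal.mem_span_singleton'.1 hy
  obtain ⟨z₁, hz₁⟩ := Ideal.mem_span_singleton'.1 hz
  by_cases hc0 : c = 0
  · left
    subst hc0
    have : x = 0 := by simpa using hx₁.symm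
    rw [hc', this]
  · have hcm : c ∈ Ideal.span ({x, y, z} : Set A) := by
      rw [hc']; exact Ideal.subset_span (by simp)
    rw [show ({x, y, z} : Set A) = insert x {y, z} from rfl, Ideal.mem_span_insert] at hcm
    obtain ⟨α, w, hw, hcw⟩ := hcm
    rw [show ({y, z} : Set A) = insert y {z} from rfl, Ideal.mem_span_insert] at hw
    obtain ⟨β, v, hv, hwv⟩ := hw
    obtain ⟨γ, hv'⟩ := Ideal.mem_span_singleton'.1 hv
    have key : (α * x₁ + β * y₁ + γ * z₁) * c = 1 * c := by
      rw [one_mul]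
      linear_combination α * hx₁ + β * hy₁ + γ * hz₁ - hcw - hwv + hv'
    have h1 : α * x₁ + β * y₁ + γ * z₁ = 1 := mul_right_cancel₀ hc0 key
    have hunit : IsUnit (α * x₁) ∨ IsUnit (β * y₁) ∨ IsUnit (γ * z₁) := by
      by_contra hcon
      push_neg at hcon
      obtain ⟨h1', h2', h3'⟩ := hcon
      have : (1 : A) ∈ IsLocalRing.maximalIdeal A := by
        rw [← h1]
        exact Ideal.add_mem _ (Ideal.add_mem _ h1' h2') h3'
      exact (IsLocalRing.maximalIdeal.isMaximal A).ne_top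
        (Ideal.eq_top_of_isUnit_mem _ this isUnit_one)
    have gen : ∀ w w₁ : A, w₁ * c = w → IsUnit w₁ → Ideal.span ({c} : Set A) = Ideal.span {w} := by
      intro w w₁ hw1 hu
      rw [Ideal.span_singleton_eq_span_singleton]
      exact ⟨hu.unit, by simpa [mul_comm] using hw1⟩
    rcases hunit with h | h | h
    · exact Or.inl (hc'.trans (gen x x₁ hx₁ (isUnit_of_mul_isUnit_right h)))
    · exact Or.inr (Or.inl (hc'.trans (gen y y₁ hy₁ (isUnit_of_mul_isUnit_right h))))
    · exact Or.inr (Or.inr (hc'.trans (gen z z₁ hz₁ (isUnit_of_mul_isUnit_right h))))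

lemma aux_engine_dvd {A : Type*} [CommRing A] [IsDomain A] [IsLocalRing A]
    (hht : ∀ Q : Ideal A, Q.IsPrime → Q = ⊥ ∨ Q = IsLocalRing.maximalIdeal A)
    (d : A) (hd0 : d ≠ 0) (hdM : d ∈ IsLocalRing.maximalIdeal A)
    (hprin : ∀ J : Ideal A, J.FG → d ∈ J → J.IsPrincipal) :
    ∀ a b : A, a ∣ b ∨ b ∣ a := by
  intro a b
  by_contra hcon
  push_neg at hcon
  obtain ⟨hab, hba⟩ := hcon
  have ha0 : a ≠ 0 := by rintro rfl; exact hba (dvd_zero b)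
  have key : ∀ k : ℕ, d ^ k ∣ a ∧ d ^ k ∣ b := by
    intro k
    induction k with
    | zero => simp
    | succ k ih =>
      obtain ⟨⟨a', ha'⟩, ⟨b', hb'⟩⟩ := ih
      have hJ : (Ideal.span ({a', b', d} : Set A)).IsPrincipal := by
        apply hprin
        · exact Submodule.fg_span (Set.toFinite _)
        · exact Ideal.subset_span (by simp)
      rcases aux_span_triple_principal hJ with h | h | h
      · exfalso
        have : b' ∈ Ideal.span ({a'} : Set A) := by
          rw [← h]; exact Ideal.subset_span (by simp)
        obtain ⟨t, ht⟩ := Ideal.mem_span_singleton'.1 this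
        exact hab ⟨t, by rw [hb', ← ht, ha']; ring⟩
      · exfalso
        have : a' ∈ Ideal.span ({b'} : Set A) := by
          rw [← h]; exact Ideal.subset_span (by simp)
        obtain ⟨t, ht⟩ := Ideal.mem_span_singleton'.1 this
        exact hba ⟨t, by rw [ha', ← ht, hb']; ring⟩
      · have ha'' : a' ∈ Ideal.span ({d} : Set A) := by
          rw [← h]; exact Ideal.subset_span (by simp)
        have hb'' : b' ∈ Ideal.span ({d} : Set A) := by
          rw [← h]; exact Ideal.subset_span (by simp)
        obtain ⟨t, ht⟩ := Ideal.mem_span_singleton'.1 ha''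
        obtain ⟨u, hu⟩ := Ideal.mem_span_singleton'.1 hb''
        constructor
        · exact ⟨t, by rw [ha', ← ht, pow_succ]; ring⟩
        · exact ⟨u, by rw [hb', ← hu, pow_succ]; ring⟩
  have hdisj : Disjoint ((Ideal.span ({a} : Set A) : Ideal A) : Set A)
      ((Submonoid.powers d : Submonoid A) : Set A) := by
    rw [Set.disjoint_left]
    intro w hw hwp
    obtain ⟨n, hn⟩ := (Submonoid.mem_powers_iff _ _).1 hwp
    obtain ⟨r, hr⟩ := Ideal.mem_span_singleton'.1 hw
    rw [← hn] at hr
    obtain ⟨t, ht⟩ := (key (n + 1)).1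
    have : d ^ n * 1 = d ^ n * (d * (r * t)) := by
      linear_combination (-1 : A) * hr + r * ht
    have h1 : (1 : A) = d * (r * t) := mul_left_cancel₀ (pow_ne_zero n hd0) this
    have : IsUnit d := IsUnit.of_mul_eq_one (r * t) h1.symm
    exact (IsLocalRing.maximalIdeal.isMaximal A).ne_top
      (Ideal.eq_top_of_isUnit_mem _ hdM this)
  obtain ⟨p, hp, hle, hdisj'⟩ := Ideal.exists_le_prime_disjoint _ _ hdisj
  rcases hht p hp with rfl | rfl
  · have : a ∈ (⊥ : Ideal A) := hle (Ideal.subset_span (by simp))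
    exact ha0 (by simpa using this)
  · exact Set.disjoint_left.1 hdisj' hdM ⟨1, pow_one d⟩

variable {R : Type*} [CommRing R] [IsDomain R]

lemma aux_tOp_mono {I I' : FracId R} (h : I ≤ I') : tOp I ≤ tOp I' := by
  apply iSup₂_le
  intro J hJ
  exact le_iSup₂_of_le J ⟨hJ.1, hJ.2.1, hJ.2.2.trans h⟩ le_rfl

lemma aux_lp_lemma {M J : Ideal R}
    (hnle : ¬ ((J : FracId R) * ((1 : FracId R) / (J : FracId R)) ≤ (M : FracId R))) :
    ∃ a ∈ J, ∃ s ∉ M, ∀ y ∈ J, ∃ r : R, s * y = a * r := by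
  rw [FractionalIdeal.mul_le] at hnle
  push_neg at hnle
  obtain ⟨i, hi, j, hj, hij⟩ := hnle
  have hJ0 : (J : FracId R) ≠ 0 := by
    rintro h0
    rw [h0] at hj
    rw [FractionalIdeal.div_zero] at hj
    rw [FractionalIdeal.mem_zero_iff] at hj
    subst hj
    exact hij (by simp)
  obtain ⟨a, haJ, rfl⟩ := (FractionalIdeal.mem_coeIdeal _).1 hi
  have hmem1 : algebraMap R (FractionRing R) a * j ∈ (1 : FracId R) :=
    FractionalIdeal.mul_one_div_le_one
      (FractionalIdeal.mul_mem_mul hi hj)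
  obtain ⟨s, hs⟩ := (FractionalIdeal.mem_one_iff _).1 hmem1
  have hsM : s ∉ M := by
    intro hsm
    exact hij ((FractionalIdeal.mem_coeIdeal _).2 ⟨s, hsm, hs⟩)
  refine ⟨a, haJ, s, hsM, ?_⟩
  intro y hy
  have hjy : j * algebraMap R (FractionRing R) y ∈ (1 : FracId R) := by
    have := (FractionalIdeal.mem_div_iff_of_ne_zero hJ0).1 hj
    exact this _ ((FractionalIdeal.mem_coeIdeal _).2 ⟨y, hy, rfl⟩)
  obtain ⟨r, hr⟩ := (FractionalIdeal.mem_one_iff _).1 hjy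
  refine ⟨r, IsFractionRing.injective R (FractionRing R) ?_⟩
  rw [_root_.map_mul, _root_.map_mul, hs, hr]
  ring

lemma aux_map_principal {M : Ideal R} [M.IsPrime] {J : Ideal R}
    {a s : R} (hsM : s ∉ M) (haJ : a ∈ J)
    (h : ∀ y ∈ J, ∃ r : R, s * y = a * r) :
    Ideal.map (algebraMap R (Localization.AtPrime M)) J =
      Ideal.span {algebraMap R (Localization.AtPrime M) a} := by
  set φ := algebraMap R (Localization.AtPrime M) with hφ
  apply le_antisymm
  · rw [Ideal.map_le_iff_le_comap]
    intro y hy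
    rw [Ideal.mem_comap, Ideal.mem_span_singleton]
    obtain ⟨r, hr⟩ := h y hy
    have hu : IsUnit (φ s) := IsLocalization.map_units _ (⟨s, hsM⟩ : M.primeCompl)
    obtain ⟨u, hu'⟩ := hu
    have h2 : (u : Localization.AtPrime M) * φ y = φ a * φ r := by
      rw [hu', ← _root_.map_mul, ← _root_.map_mul, hr]
    refine ⟨(↑u⁻¹ : Localization.AtPrime M) * φ r, ?_⟩
    calc φ y = ↑u⁻¹ * ((u : Localization.AtPrime M) * φ y) := by
          rw [Units.inv_mul_cancel_left]
      _ = ↑u⁻¹ * (φ a * φ r) := by rw [h2]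
      _ = φ a * (↑u⁻¹ * φ r) := by ring
  · rw [Ideal.span_le, Set.singleton_subset_iff]
    exact Ideal.mem_map_of_mem _ haJ

end Helpers

/-- If `M` is a `t`-super potent maximal `t`-ideal of height one, then `R_M` is a
valuation domain; in particular, a one-dimensional local `d`-super potent domain is a valuation
domain. -/
theorem tSuperPotent_height_one_valuation :
    (∀ (R : Type*) [CommRing R] [IsDomain R] (M : Ideal R) [M.IsPrime],
      IsTSuperPotent M → HeightOnePrime M → IsValuationDomain (Localization.AtPrime M)) ∧
    (∀ (R : Type*) [CommRing R] [IsDomain R] [IsLocalRing R],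
      ringKrullDim R = 1 → IsDSuperPotent (IsLocalRing.maximalIdeal R) →
        IsValuationDomain R) := by
  constructor
  · -- Part 1: t-super potent maximal t-ideal of height one
    intro R _ _ M _ hsp hht1
    obtain ⟨hMmax, I, hIsr, hIM⟩ := hsp
    obtain ⟨⟨hI0, hIfg, _⟩, hinv⟩ := hIsr
    haveI : IsDomain (Localization.AtPrime M) :=
      IsLocalization.isDomain_of_local_atPrime ‹M.IsPrime›
    have hkey : ∀ J : Ideal R, J.FG → I ≤ J →
        ∃ a ∈ J, Ideal.map (algebraMap R (Localization.AtPrime M)) J =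
          Ideal.span {algebraMap R (Localization.AtPrime M) a} := by
      intro J hfg hIJ
      obtain ⟨hJ0, htinv⟩ := hinv J hfg hIJ
      have hnle : ¬ ((J : FracId R) * ((1 : FracId R) / (J : FracId R)) ≤ (M : FracId R)) := by
        intro hle
        have hmono := aux_tOp_mono hle
        rw [htinv, hMmax.2.1.2] at hmono
        have h1 : (1 : FractionRing R) ∈ ((M : FracId R) : Submodule R (FractionRing R)) :=
          hmono (FractionalIdeal.mem_coe.2 (FractionalIdeal.one_mem_one _))
        obtain ⟨m, hm, hm1⟩ := (FractionalIdeal.mem_coeIdeal _).1 (FractionalIdeal.mem_coe.1 h1)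
        have hm1' : m = 1 := IsFractionRing.injective R (FractionRing R) (by rw [hm1, _root_.map_one])
        exact hMmax.1 (Ideal.eq_top_of_isUnit_mem _ hm (hm1' ▸ isUnit_one))
      obtain ⟨a, haJ, s, hsM, hls⟩ := aux_lp_lemma hnle
      exact ⟨a, haJ, aux_map_principal hsM haJ hls⟩
    obtain ⟨a0, ha0I, hmapI⟩ := hkey I hIfg le_rfl
    obtain ⟨x, hxI, hx0⟩ := Submodule.exists_mem_ne_zero_of_ne_bot hI0
    have hd0 : algebraMap R (Localization.AtPrime M) a0 ≠ 0 := by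
      intro h0
      have hmem : algebraMap R (Localization.AtPrime M) x ∈
          Ideal.map (algebraMap R (Localization.AtPrime M)) I :=
        Ideal.mem_map_of_mem _ hxI
      rw [hmapI, h0, Ideal.span_singleton_eq_bot.2 rfl] at hmem
      have : algebraMap R (Localization.AtPrime M) x = 0 := by simpa using hmem
      exact hx0 (IsLocalization.injective (Localization.AtPrime M)
        M.primeCompl_le_nonZeroDivisors (by rw [this, _root_.map_zero]))
    have hdmax : algebraMap R (Localization.AtPrime M) a0 ∈
        IsLocalRing.maximalIdeal (Localization.AtPrime M) := by
      rw [← Localization.AtPrime.map_eq_maximalIdeal]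
      exact Ideal.mem_map_of_mem _ (hIM ha0I)
    have hht : ∀ Q : Ideal (Localization.AtPrime M), Q.IsPrime →
        Q = ⊥ ∨ Q = IsLocalRing.maximalIdeal (Localization.AtPrime M) := by
      intro Q hQ
      by_cases hQb : Q = ⊥
      · exact Or.inl hQb
      right
      obtain ⟨hqP, hdisj⟩ :=
        (IsLocalization.isPrime_iff_isPrime_disjoint M.primeCompl _ Q).1 hQ
      have hqM : Ideal.comap (algebraMap R (Localization.AtPrime M)) Q ≤ M := by
        intro x hx
        by_contra hxM
        exact Set.disjoint_left.1 hdisj hxM hx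
      have hq0 : Ideal.comap (algebraMap R (Localization.AtPrime M)) Q ≠ ⊥ := by
        intro h0
        apply hQb
        rw [← IsLocalization.map_comap M.primeCompl (Localization.AtPrime M) Q, Ideal.under_def, h0,
          Ideal.map_bot]
      have hqMeq : Ideal.comap (algebraMap R (Localization.AtPrime M)) Q = M := by
        rcases lt_or_eq_of_le hqM with hlt | heq
        · exact absurd (hht1.2.2 _ hqP hlt) hq0
        · exact heq
      rw [← IsLocalization.map_comap M.primeCompl (Localization.AtPrime M) Q, Ideal.under_def, hqMeq,
        Localization.AtPrime.map_eq_maximalIdeal]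
    have hprin : ∀ J' : Ideal (Localization.AtPrime M), J'.FG →
        algebraMap R (Localization.AtPrime M) a0 ∈ J' → J'.IsPrincipal := by
      intro J' hfg' hdJ'
      obtain ⟨T, hT⟩ := hfg'
      have hsurj : ∀ x : Localization.AtPrime M, ∃ rs : R × M.primeCompl,
          x * algebraMap R (Localization.AtPrime M) rs.2 =
            algebraMap R (Localization.AtPrime M) rs.1 :=
        fun x => IsLocalization.surj M.primeCompl x
      choose p hp using hsurj
      have hfg₀ : (Ideal.span ((fun x => (p x).1) '' (T : Set (Localization.AtPrime M))) ⊔ I).FG :=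
        Submodule.FG.sup (Submodule.fg_span (Set.Finite.image _ T.finite_toSet)) hIfg
      obtain ⟨b, hbJ₀, hmap₀⟩ := hkey _ hfg₀ le_sup_right
      have hmapeq : Ideal.map (algebraMap R (Localization.AtPrime M))
          (Ideal.span ((fun x => (p x).1) '' (T : Set (Localization.AtPrime M))) ⊔ I) = J' := by
        rw [Ideal.map_sup, Ideal.map_span]
        have h1 : Ideal.span (algebraMap R (Localization.AtPrime M) ''
            ((fun x => (p x).1) '' (T : Set (Localization.AtPrime M)))) = J' := by
          rw [← hT]
          apply le_antisymm
          · rw [Ideal.span_le]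
            rintro _ ⟨_, ⟨x, hxT, rfl⟩, rfl⟩
            rw [← hp x]
            exact Ideal.mul_mem_right _ _ (Ideal.subset_span hxT)
          · rw [Ideal.span_le]
            intro x hxT
            obtain ⟨u, hu⟩ := IsLocalization.map_units (Localization.AtPrime M) (p x).2
            have hx' : x = algebraMap R (Localization.AtPrime M) (p x).1 * ↑u⁻¹ := by
              rw [Units.eq_mul_inv_iff_mul_eq, hu]
              exact hp x
            rw [SetLike.mem_coe, hx']
            exact Ideal.mul_mem_right _ _
              (Ideal.subset_span ⟨_, ⟨x, hxT, rfl⟩, rfl⟩)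
        rw [h1, hmapI]
        exact sup_eq_left.2 ((Ideal.span_le).2 (Set.singleton_subset_iff.2 hdJ'))
      exact ⟨algebraMap R (Localization.AtPrime M) b, by rw [← hmapeq, hmap₀]⟩
    exact ⟨inferInstance, aux_engine_dvd hht _ hd0 hdmax hprin⟩
  · -- Part 2: one-dimensional local d-super potent domain
    intro R _ _ _ hdim hdsp
    obtain ⟨I, hI0, hIfg, hIM, hinv⟩ := hdsp
    have hMne : IsLocalRing.maximalIdeal R ≠ ⊤ :=
      (IsLocalRing.maximalIdeal.isMaximal R).ne_top
    have hprin0 : ∀ J : Ideal R, J.FG → I ≤ J → ∃ a ∈ J, J = Ideal.span {a} := by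
      intro J hfg hIJ
      obtain ⟨hJ0, heq⟩ := hinv J hfg hIJ
      have hnle : ¬ ((J : FracId R) * ((1 : FracId R) / (J : FracId R)) ≤
          ((IsLocalRing.maximalIdeal R : Ideal R) : FracId R)) := by
        intro hle
        rw [heq] at hle
        obtain ⟨m, hm, hm1⟩ :=
          (FractionalIdeal.mem_coeIdeal _).1 (hle (FractionalIdeal.one_mem_one _))
        have hm1' : m = 1 := IsFractionRing.injective R (FractionRing R) (by rw [hm1, _root_.map_one])
        exact hMne (Ideal.eq_top_of_isUnit_mem _ hm (hm1' ▸ isUnit_one))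
      obtain ⟨a, haJ, s, hsM, hls⟩ := aux_lp_lemma hnle
      have hsu : IsUnit s := by
        by_contra hns
        exact hsM ((IsLocalRing.mem_maximalIdeal s).2 (mem_nonunits_iff.2 hns))
      obtain ⟨u, hu⟩ := hsu
      refine ⟨a, haJ, le_antisymm ?_ ?_⟩
      · intro y hy
        obtain ⟨r, hr⟩ := hls y hy
        rw [Ideal.mem_span_singleton]
        refine ⟨↑u⁻¹ * r, ?_⟩
        calc y = ↑u⁻¹ * ((u : R) * y) := by rw [Units.inv_mul_cancel_left]
          _ = ↑u⁻¹ * (s * y) := by rw [hu]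
          _ = ↑u⁻¹ * (a * r) := by rw [hr]
          _ = a * (↑u⁻¹ * r) := by ring
      · rw [Ideal.span_le, Set.singleton_subset_iff]; exact haJ
    obtain ⟨d, hdI, hId⟩ := hprin0 I hIfg le_rfl
    have hd0 : d ≠ 0 := by
      rintro rfl
      exact hI0 (by rw [hId, Ideal.span_singleton_eq_bot])
    have hht : ∀ Q : Ideal R, Q.IsPrime → Q = ⊥ ∨ Q = IsLocalRing.maximalIdeal R := by
      intro Q hQ
      by_cases hQb : Q = ⊥
      · exact Or.inl hQb
      by_cases hQm : Q = IsLocalRing.maximalIdeal R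
      · exact Or.inr hQm
      exfalso
      have hbotP : (⊥ : Ideal R).IsPrime := Ideal.bot_prime
      have hmaxP : (IsLocalRing.maximalIdeal R).IsPrime :=
        (IsLocalRing.maximalIdeal.isMaximal R).isPrime
      have h01 : (⊥ : Ideal R) < Q := bot_lt_iff_ne_bot.2 hQb
      have h12 : Q < IsLocalRing.maximalIdeal R :=
        lt_of_le_of_ne (IsLocalRing.le_maximalIdeal hQ.ne_top) hQm
      let c : LTSeries (PrimeSpectrum R) :=
        ⟨2, ![⟨⊥, hbotP⟩, ⟨Q, hQ⟩, ⟨IsLocalRing.maximalIdeal R, hmaxP⟩], by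
          intro i
          fin_cases i
          · exact h01
          · exact h12⟩
      have hlen := Order.LTSeries.length_le_krullDim c
      rw [show Order.krullDim (PrimeSpectrum R) = ringKrullDim R from rfl, hdim] at hlen
      norm_num at hlen
    have hprin : ∀ J : Ideal R, J.FG → d ∈ J → J.IsPrincipal := by
      intro J hfg hdJ
      have hIJ : I ≤ J := by
        rw [hId, Ideal.span_le, Set.singleton_subset_iff]
        exact hdJ
      obtain ⟨a, _, hJa⟩ := hprin0 J hfg hIJ
      exact ⟨a, hJa⟩
    exact ⟨inferInstance, aux_engine_dvd hht d hd0 (hIM hdI) hprin⟩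
end

section
/- Let P be a prime ideal of an integral domain R. The following statements are equivalent: (1) P is divided, i.e., P = PR_P (equivalently, for every x ∈ P and every s ∈ R \ P there exists y ∈ P with x = s·y); (2) P is comparable under inclusion to every principal ideal of R; (3) P is comparable under inclusion to every ideal of R. -/
open FractionalIdeal

/-- For a prime ideal `P` of a domain `R`, the following are equivalent:
(1) `P` is divided; (2) `P` is comparable to every principal ideal; (3) `P` is comparable to
every ideal. -/
theorem divided_tfae {R : Type*} [CommRing R] [IsDomain R] (P : Ideal R) (hP : P.IsPrime) :
    List.TFAE
      [IsDividedIdeal P,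
       ∀ a : R, P ≤ Ideal.span {a} ∨ Ideal.span {a} ≤ P,
       ∀ I : Ideal R, P ≤ I ∨ I ≤ P] := by
  tfae_have 1 → 2 := by
    intro h a
    by_cases ha : a ∈ P
    · exact Or.inr ((Ideal.span_singleton_le_iff_mem P).mpr ha)
    · left
      intro x hx
      obtain ⟨y, _, hxy⟩ := h x hx a ha
      exact Ideal.mem_span_singleton.mpr ⟨y, hxy⟩
  tfae_have 2 → 3 := by
    intro h I
    by_cases hI : I ≤ P
    · exact Or.inr hI
    · left
      obtain ⟨a, haI, haP⟩ := Set.not_subset.mp hI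
      rcases h a with h1 | h1
      · exact h1.trans ((Ideal.span_singleton_le_iff_mem I).mpr haI)
      · exact absurd (h1 (Ideal.mem_span_singleton_self a)) haP
  tfae_have 3 → 1 := by
    intro h x hx s hs
    rcases h (Ideal.span {s}) with h1 | h1
    · obtain ⟨y, hxy⟩ := Ideal.mem_span_singleton.mp (h1 hx)
      exact ⟨y, (hP.mem_or_mem (hxy ▸ hx)).resolve_left hs, hxy⟩
    · exact absurd (h1 (Ideal.mem_span_singleton_self s)) hs
  tfae_finish
end

section
/- Let (R, M) be a local integral domain that is not a field. Then R is d-super potent (i.e., M contains a nonzero finitely generated ideal I such that every finitely generated ideal of R containing I is invertible) if and only if there is a divided prime ideal P strictly contained in M such that R/P is a valuation domain. -/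
open FractionalIdeal

section AuxProof

variable {R : Type*} [CommRing R] [IsDomain R] [IsLocalRing R]

/-- An invertible integral ideal over a local domain is principal (with nonzero generator). -/
lemma aux_principal_of_invertible {J : Ideal R} (h : IsInvertibleIdeal J) :
    ∃ d : R, d ≠ 0 ∧ J = Ideal.span {d} := by
  obtain ⟨hJ0, hinv⟩ := h
  have hfin : {I : Ideal R | I.IsMaximal}.Finite := by
    apply Set.Finite.subset (Set.finite_singleton (IsLocalRing.maximalIdeal R))
    intro I hI
    exact IsLocalRing.eq_maximalIdeal hI
  have hp := FractionalIdeal.isPrincipal.of_finite_maximals_of_inv le_rfl hfin _ _ hinv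
  rw [FractionalIdeal.coe_coeIdeal] at hp
  have hp2 : J.IsPrincipal :=
    (IsLocalization.coeSubmodule_isPrincipal (FractionRing R) le_rfl).mp hp
  obtain ⟨d, hd⟩ := hp2.principal
  rw [Ideal.submodule_span_eq] at hd
  refine ⟨d, fun h0 => hJ0 ?_, hd⟩
  rw [hd, h0, Ideal.span_singleton_eq_bot]

omit [IsDomain R] [IsLocalRing R] in
lemma aux_dvd_of_eq_mul_unit {x d c : R} (hc : IsUnit c) (h : x = d * c) : x ∣ d := by
  obtain ⟨u, rfl⟩ := hc
  exact ⟨(↑u⁻¹ : Rˣ), by rw [h, mul_assoc, Units.mul_inv, mul_one]⟩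

lemma aux_tri {a : R}
    (hinv : ∀ J : Ideal R, J.FG → Ideal.span {a} ≤ J → IsInvertibleIdeal J)
    (x y z : R) (hmem : a ∈ Ideal.span ({x, y, z} : Set R)) :
    (x ∣ y ∧ x ∣ z) ∨ (y ∣ x ∧ y ∣ z) ∨ (z ∣ x ∧ z ∣ y) := by
  set J : Ideal R := Ideal.span ({x, y, z} : Set R) with hJdef
  have hfg : J.FG := Submodule.fg_span (Set.toFinite _)
  have hle : Ideal.span {a} ≤ J := by
    rw [Ideal.span_singleton_le_iff_mem]; exact hmem
  obtain ⟨d, hd0, hJ⟩ := aux_principal_of_invertible (hinv J hfg hle)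
  have hx : d ∣ x := by
    rw [← Ideal.mem_span_singleton, ← hJ]; exact Ideal.subset_span (by simp)
  have hy : d ∣ y := by
    rw [← Ideal.mem_span_singleton, ← hJ]; exact Ideal.subset_span (by simp)
  have hz : d ∣ z := by
    rw [← Ideal.mem_span_singleton, ← hJ]; exact Ideal.subset_span (by simp)
  obtain ⟨x', hx'⟩ := hx
  obtain ⟨y', hy'⟩ := hy
  obtain ⟨z', hz'⟩ := hz
  have hdmem : d ∈ Ideal.span ({x, y, z} : Set R) := by
    rw [← hJdef, hJ]; exact Ideal.mem_span_singleton_self d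
  rw [Ideal.mem_span_insert] at hdmem
  obtain ⟨u, w, hw, hdw⟩ := hdmem
  rw [Ideal.mem_span_insert] at hw
  obtain ⟨v, w2, hw2, hww⟩ := hw
  rw [Ideal.mem_span_singleton] at hw2
  obtain ⟨t, ht⟩ := hw2
  have key : d * 1 = d * (u * x' + (v * y' + z' * t)) := by
    nth_rewrite 1 [hdw]
    rw [hww, ht, hx', hy', hz']; ring
  have hone : u * x' + (v * y' + z' * t) = 1 := (mul_left_cancel₀ hd0 key).symm
  have hunit : IsUnit (u * x') ∨ IsUnit (v * y') ∨ IsUnit (z' * t) := by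
    by_contra hcon
    push_neg at hcon
    obtain ⟨h1, h2, h3⟩ := hcon
    have := IsLocalRing.nonunits_add (mem_nonunits_iff.mpr h1)
      (IsLocalRing.nonunits_add (mem_nonunits_iff.mpr h2) (mem_nonunits_iff.mpr h3))
    rw [hone] at this
    exact this isUnit_one
  rcases hunit with h | h | h
  · have hx'u : IsUnit x' := isUnit_of_mul_isUnit_right h
    have hxd : x ∣ d := aux_dvd_of_eq_mul_unit hx'u hx'
    exact Or.inl ⟨hxd.trans ⟨y', hy'⟩, hxd.trans ⟨z', hz'⟩⟩
  · have hy'u : IsUnit y' := isUnit_of_mul_isUnit_right h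
    have hyd : y ∣ d := aux_dvd_of_eq_mul_unit hy'u hy'
    exact Or.inr (Or.inl ⟨hyd.trans ⟨x', hx'⟩, hyd.trans ⟨z', hz'⟩⟩)
  · have hz'u : IsUnit z' := isUnit_of_mul_isUnit_left h
    have hzd : z ∣ d := aux_dvd_of_eq_mul_unit hz'u hz'
    exact Or.inr (Or.inr ⟨hzd.trans ⟨x', hx'⟩, hzd.trans ⟨y', hy'⟩⟩)

lemma aux_comp2 {a : R}
    (hinv : ∀ J : Ideal R, J.FG → Ideal.span {a} ≤ J → IsInvertibleIdeal J)
    (b : R) : a ∣ b ∨ b ∣ a := by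
  rcases aux_tri hinv a b b (Ideal.subset_span (by simp)) with ⟨h, _⟩ | ⟨h, _⟩ | ⟨h, _⟩
  · exact Or.inl h
  · exact Or.inr h
  · exact Or.inr h

lemma aux_pow_comp {a : R} (ha0 : a ≠ 0)
    (hinv : ∀ J : Ideal R, J.FG → Ideal.span {a} ≤ J → IsInvertibleIdeal J) :
    ∀ (n : ℕ) (x : R), a ^ n ∣ x ∨ x ∣ a ^ n := by
  intro n
  induction n with
  | zero => intro x; left; simpa using one_dvd x
  | succ n ih =>
    intro x
    rcases ih x with h | h
    · obtain ⟨y, hy⟩ := h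
      rcases aux_comp2 hinv y with ⟨c, hc⟩ | ⟨c, hc⟩
      · left; exact ⟨c, by rw [hy, hc, pow_succ]; ring⟩
      · right; exact ⟨c, by rw [pow_succ]; nth_rewrite 2 [hc]; rw [hy]; ring⟩
    · right; exact h.trans ⟨a, pow_succ a n⟩

lemma aux_divdvd {a : R} (ha0 : a ≠ 0)
    (hinv : ∀ J : Ideal R, J.FG → Ideal.span {a} ≤ J → IsInvertibleIdeal J) :
    ∀ (m n : ℕ) (x y : R), x ∣ a ^ m → y ∣ a ^ n → x ∣ y ∨ y ∣ x := by
  intro m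
  induction m with
  | zero => intro n x y hx _; left; exact (isUnit_of_dvd_one (by simpa using hx)).dvd
  | succ m ih =>
    intro n x y hx hy
    cases n with
    | zero => right; exact (isUnit_of_dvd_one (by simpa using hy)).dvd
    | succ k =>
      rcases aux_tri hinv x y a (Ideal.subset_span (by simp)) with
        ⟨h, _⟩ | ⟨h, _⟩ | ⟨h1, h2⟩
      · exact Or.inl h
      · exact Or.inr h
      · obtain ⟨x1, rfl⟩ := h1
        obtain ⟨y1, rfl⟩ := h2
        have hx1 : x1 ∣ a ^ m := by
          obtain ⟨t, ht⟩ := hx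
          exact ⟨t, mul_left_cancel₀ ha0 (by rw [← pow_succ', ht]; ring)⟩
        have hy1 : y1 ∣ a ^ k := by
          obtain ⟨t, ht⟩ := hy
          exact ⟨t, mul_left_cancel₀ ha0 (by rw [← pow_succ', ht]; ring)⟩
        rcases ih k x1 y1 hx1 hy1 with h | h
        · exact Or.inl (mul_dvd_mul_left a h)
        · exact Or.inr (mul_dvd_mul_left a h)

end AuxProof

/-- A local domain `(R, M)` which is not a field is `d`-super potent iff there is
a divided prime `P ⊊ M` such that `R/P` is a valuation domain. -/
theorem dSuperPotent_iff_divided_prime {R : Type*} [CommRing R] [IsDomain R] [IsLocalRing R]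
    (hnf : ¬ IsField R) :
    IsDSuperPotent (IsLocalRing.maximalIdeal R) ↔
      ∃ P : Ideal R, IsDividedPrime P ∧ P < IsLocalRing.maximalIdeal R ∧
        IsValuationDomain (R ⧸ P) := by
  classical
  constructor
  · rintro ⟨I, hI0, hIfg, hIM, hinv0⟩
    obtain ⟨a, ha0, hIa⟩ := aux_principal_of_invertible (hinv0 I hIfg le_rfl)
    have hinv : ∀ J : Ideal R, J.FG → Ideal.span {a} ≤ J → IsInvertibleIdeal J := by
      intro J hfg hle
      exact hinv0 J hfg (hIa ▸ hle)
    have haM : a ∈ IsLocalRing.maximalIdeal R := by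
      apply hIM
      rw [hIa]
      exact Ideal.mem_span_singleton_self a
    have haU : ¬ IsUnit a := (IsLocalRing.mem_maximalIdeal a).mp haM
    set P : Ideal R :=
      { carrier := {z : R | ∀ n : ℕ, a ^ n ∣ z}
        add_mem' := fun hx hy n => dvd_add (hx n) (hy n)
        zero_mem' := fun n => dvd_zero _
        smul_mem' := fun c x hx n => by simpa using (hx n).mul_left c } with hPdef
    have hmemP : ∀ z : R, z ∈ P ↔ ∀ n : ℕ, a ^ n ∣ z := fun z => Iff.rfl
    have haP : a ∉ P := by
      intro h
      obtain ⟨t, ht⟩ := (hmemP a).mp h 2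
      have h1 : (1 : R) = a * t := mul_left_cancel₀ ha0 (by rw [mul_one]; nth_rewrite 1 [ht]; ring)
      exact haU (IsUnit.of_mul_eq_one (a := a) t h1.symm)
    have hPprime : P.IsPrime := by
      constructor
      · intro htop
        have h1 := (Ideal.eq_top_iff_one P).mp htop
        exact haU (isUnit_of_dvd_one (by simpa using (hmemP 1).mp h1 1))
      · intro x y hxy
        by_contra hcon
        push_neg at hcon
        obtain ⟨hx, hy⟩ := hcon
        obtain ⟨m, hm⟩ := not_forall.mp (fun h => hx ((hmemP x).mpr h))
        have hxm : x ∣ a ^ m := (aux_pow_comp ha0 hinv m x).resolve_left hm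
        obtain ⟨n, hn⟩ := not_forall.mp (fun h => hy ((hmemP y).mpr h))
        have hyn : y ∣ a ^ n := (aux_pow_comp ha0 hinv n y).resolve_left hn
        have hxy' : x * y ∣ a ^ (m + n) := by
          rw [pow_add]; exact mul_dvd_mul hxm hyn
        have hdd : a ^ (m + n + 1) ∣ a ^ (m + n) := ((hmemP _).mp hxy (m + n + 1)).trans hxy'
        obtain ⟨t, ht⟩ := hdd
        have h1 : a ^ (m + n) * 1 = a ^ (m + n) * (a * t) := by
          rw [mul_one]
          nth_rewrite 1 [ht]
          rw [pow_succ]; ring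
        have h2 := mul_left_cancel₀ (pow_ne_zero (m + n) ha0) h1
        exact haU (IsUnit.of_mul_eq_one (a := a) t h2.symm)
    have hPdiv : IsDividedIdeal P := by
      intro x hx s hs
      obtain ⟨n, hn⟩ := not_forall.mp (fun h => hs ((hmemP s).mpr h))
      have hsn : s ∣ a ^ n := (aux_pow_comp ha0 hinv n s).resolve_left hn
      obtain ⟨t, ht⟩ := hsn
      have hs0 : s ≠ 0 := by
        rintro rfl
        exact pow_ne_zero n ha0 (by rw [ht, zero_mul])
      obtain ⟨z, hz⟩ := (hmemP x).mp hx n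
      refine ⟨t * z, (hmemP _).mpr fun m => ?_, by rw [hz, ht]; ring⟩
      obtain ⟨w, hw⟩ := (hmemP x).mp hx (m + n)
      refine ⟨t * w, mul_left_cancel₀ hs0 ?_⟩
      have e1 : s * (t * z) = x := by rw [hz, ht]; ring
      have e2 : s * (a ^ m * (t * w)) = x := by rw [hw, pow_add, ht]; ring
      rw [e1, ← e2]
    have hPle : P ≤ IsLocalRing.maximalIdeal R := by
      intro z hz
      obtain ⟨c, hc⟩ := (hmemP z).mp hz 1
      rw [pow_one] at hc
      rw [hc]
      exact Ideal.mul_mem_right c _ haM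
    refine ⟨P, ⟨hPprime, hPdiv⟩, lt_of_le_not_ge hPle fun h => haP (h haM), ?_⟩
    haveI := hPprime
    refine ⟨(Ideal.Quotient.isDomain_iff_prime P).mpr hPprime, ?_⟩
    intro xb yb
    obtain ⟨x, rfl⟩ := Ideal.Quotient.mk_surjective xb
    obtain ⟨y, rfl⟩ := Ideal.Quotient.mk_surjective yb
    by_cases hx : x ∈ P
    · right
      rw [Ideal.Quotient.eq_zero_iff_mem.mpr hx]
      exact dvd_zero _
    by_cases hy : y ∈ P
    · left
      rw [Ideal.Quotient.eq_zero_iff_mem.mpr hy]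
      exact dvd_zero _
    obtain ⟨m, hm⟩ := not_forall.mp (fun h => hx ((hmemP x).mpr h))
    have hxm : x ∣ a ^ m := (aux_pow_comp ha0 hinv m x).resolve_left hm
    obtain ⟨n, hn⟩ := not_forall.mp (fun h => hy ((hmemP y).mpr h))
    have hyn : y ∣ a ^ n := (aux_pow_comp ha0 hinv n y).resolve_left hn
    rcases aux_divdvd ha0 hinv m n x y hxm hyn with h | h
    · exact Or.inl (map_dvd (Ideal.Quotient.mk P) h)
    · exact Or.inr (map_dvd (Ideal.Quotient.mk P) h)
  · rintro ⟨P, ⟨hPprime, hPdiv⟩, hPlt, hdom, hdvdQ⟩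
    obtain ⟨a, haM, haP⟩ := SetLike.exists_of_lt hPlt
    have ha0 : a ≠ 0 := fun h => haP (h ▸ P.zero_mem)
    have key1 : ∀ x y : R, x ∉ P →
        (Ideal.Quotient.mk P x ∣ Ideal.Quotient.mk P y) → x ∣ y := by
      rintro x y hx ⟨cb, hcb⟩
      obtain ⟨c, rfl⟩ := Ideal.Quotient.mk_surjective cb
      rw [← _root_.map_mul] at hcb
      have hsub : y - x * c ∈ P := Ideal.Quotient.eq.mp hcb
      obtain ⟨q, hq, heq⟩ := hPdiv _ hsub x hx
      exact ⟨c + q, by rw [mul_add, ← heq]; ring⟩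
    have key2 : ∀ x y : R, x ∉ P → y ∉ P → x ∣ y ∨ y ∣ x := by
      intro x y hx hy
      rcases hdvdQ (Ideal.Quotient.mk P x) (Ideal.Quotient.mk P y) with h | h
      · exact Or.inl (key1 x y hx h)
      · exact Or.inr (key1 y x hy h)
    have key3 : ∀ x : R, x ∉ P → ∀ z ∈ P, x ∣ z := by
      intro x hx z hz
      obtain ⟨q, _, heq⟩ := hPdiv z hz x hx
      exact ⟨q, heq⟩
    have comp : ∀ b : R, a ∣ b ∨ b ∣ a := by
      intro b
      by_cases hb : b ∈ P
      · exact Or.inl (key3 a haP b hb)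
      · exact key2 a b haP hb
    have hdvdnP : ∀ x : R, x ∣ a → x ∉ P := by
      rintro x ⟨c, hc⟩ hxP
      exact haP (hc ▸ Ideal.mul_mem_right c P hxP)
    have spanlem : ∀ s : Finset R, ∃ d, d ∣ a ∧ Ideal.span (insert a ↑s) = Ideal.span {d} := by
      intro s
      induction s using Finset.induction_on with
      | empty => exact ⟨a, dvd_rfl, by simp⟩
      | @insert b s hb ih =>
        obtain ⟨d, hda, hspan⟩ := ih
        rcases comp b with hab | hba
        · refine ⟨d, hda, ?_⟩
          rw [Finset.coe_insert, Set.insert_comm, Ideal.span_insert, hspan]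
          exact sup_eq_right.mpr (Ideal.span_singleton_le_span_singleton.mpr (hda.trans hab))
        · rcases key2 d b (hdvdnP d hda) (hdvdnP b hba) with hdb | hbd
          · refine ⟨d, hda, ?_⟩
            rw [Finset.coe_insert, Set.insert_comm, Ideal.span_insert, hspan]
            exact sup_eq_right.mpr (Ideal.span_singleton_le_span_singleton.mpr hdb)
          · refine ⟨b, hba, ?_⟩
            rw [Finset.coe_insert, Set.insert_comm, Ideal.span_insert, hspan]
            exact sup_eq_left.mpr (Ideal.span_singleton_le_span_singleton.mpr hbd)
    refine ⟨Ideal.span {a}, ?_, ⟨{a}, by simp⟩, ?_, ?_⟩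
    · rw [Ne, Ideal.span_singleton_eq_bot]; exact ha0
    · rw [Ideal.span_singleton_le_iff_mem]; exact haM
    · intro J hJfg hIJ
      obtain ⟨s, hs⟩ := hJfg
      have haJ : a ∈ J := hIJ (Ideal.mem_span_singleton_self a)
      obtain ⟨d, hda, hspan⟩ := spanlem s
      have hins : Ideal.span (insert a (↑s : Set R)) = J := by
        rw [Ideal.span_insert, hs]
        exact sup_eq_right.mpr ((Ideal.span_singleton_le_iff_mem _).mpr haJ)
      have hJd : J = Ideal.span {d} := hins.symm.trans hspan
      have hd0 : d ≠ 0 := by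
        rintro rfl
        obtain ⟨c, hc⟩ := hda
        exact ha0 (by rw [hc, zero_mul])
      constructor
      · rw [hJd, Ne, Ideal.span_singleton_eq_bot]; exact hd0
      · rw [hJd, FractionalIdeal.coeIdeal_span_singleton]
        have hx0 : algebraMap R (FractionRing R) d ≠ 0 :=
          (map_ne_zero_iff _ (IsFractionRing.injective R (FractionRing R))).mpr hd0
        rw [FractionalIdeal.one_div_spanSingleton,
          FractionalIdeal.spanSingleton_mul_spanSingleton, mul_inv_cancel₀ hx0,
          FractionalIdeal.spanSingleton_one]
end

section
/- If R is a local d-super potent integral domain of Krull dimension two, then R has exactly two nonzero prime ideals. -/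
open FractionalIdeal

section Aux

variable {R : Type*} [CommRing R] [IsDomain R] [IsLocalRing R]

/-- An invertible ideal over a local domain is principal. -/
theorem aux_invertible_principal (I : Ideal R) (h : IsInvertibleIdeal I) :
    ∃ a : R, I = Ideal.span {a} := by
  obtain ⟨hne, hmul⟩ := h
  set K := FractionRing R
  have hI0 : (I : FracId R) ≠ 0 := by
    rwa [ne_eq, FractionalIdeal.coeIdeal_eq_zero]
  have h1 : (1 : K) ∈ ((I : FracId R) * ((1 : FracId R) / (I : FracId R)) : FracId R) := by
    rw [hmul]; exact FractionalIdeal.one_mem_one _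
  have key : ∀ z : K, z ∈ ((I : FracId R) * ((1 : FracId R) / (I : FracId R)) : FracId R) →
      (∃ m ∈ IsLocalRing.maximalIdeal R, algebraMap R K m = z) ∨
        ∃ a : R, I = Ideal.span {a} := by
    intro z hz
    have hz' : z ∈ (((I : FracId R) : Submodule R K) *
        (((1 : FracId R) / (I : FracId R) : FracId R) : Submodule R K)) := by
      rw [← FractionalIdeal.coe_mul]; exact hz
    refine Submodule.mul_induction_on hz' ?_ ?_
    · intro x hx y hy
      rw [FractionalIdeal.mem_coe] at hx hy
      obtain ⟨x₀, hx₀I, rfl⟩ := (FractionalIdeal.mem_coeIdeal _).mp hx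
      have hymul : ∀ w ∈ (I : FracId R), y * w ∈ (1 : FracId R) :=
        (FractionalIdeal.mem_div_iff_of_ne_zero hI0).mp hy
      have hxy1 : algebraMap R K x₀ * y ∈ (1 : FracId R) := by
        rw [mul_comm]; exact hymul _ hx
      obtain ⟨r, hr⟩ := (FractionalIdeal.mem_one_iff _).mp hxy1
      by_cases hru : IsUnit r
      · right
        obtain ⟨ru, rfl⟩ := hru
        refine ⟨x₀, le_antisymm ?_ ?_⟩
        · intro z hzI
          have hyz : y * algebraMap R K z ∈ (1 : FracId R) :=
            hymul _ ((FractionalIdeal.mem_coeIdeal _).mpr ⟨z, hzI, rfl⟩)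
          obtain ⟨w, hw⟩ := (FractionalIdeal.mem_one_iff _).mp hyz
          have heq : algebraMap R K (x₀ * w) = algebraMap R K (↑ru * z) := by
            rw [_root_.map_mul, _root_.map_mul, hw, hr]; ring
          have heq' : x₀ * w = ↑ru * z := IsFractionRing.injective R K heq
          refine Ideal.mem_span_singleton.mpr ⟨↑ru⁻¹ * w, ?_⟩
          calc z = ↑ru⁻¹ * (↑ru * z) := (Units.inv_mul_cancel_left _ _).symm
            _ = ↑ru⁻¹ * (x₀ * w) := by rw [← heq']
            _ = x₀ * (↑ru⁻¹ * w) := by ring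
        · rw [Ideal.span_le, Set.singleton_subset_iff]; exact hx₀I
      · left
        exact ⟨r, hru, hr⟩

    · rintro x y hx hy
      rcases hx with ⟨m, hm, rfl⟩ | hx
      · rcases hy with ⟨m', hm', rfl⟩ | hy
        · exact Or.inl ⟨m + m', add_mem hm hm', map_add _ _ _⟩
        · exact Or.inr hy
      · exact Or.inr hx
  rcases key 1 h1 with ⟨m, hm, hm1⟩ | hgoal
  · exfalso
    have : m = 1 := IsFractionRing.injective R K (by rw [hm1, _root_.map_one])
    subst this
    exact hm isUnit_one
  · exact hgoal

/-- In a local `d`-super potent domain, every element is comparable (w.r.t. divisibility)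
with the super rigid generator `a`. -/
theorem aux_comp {a : R} (ha : a ≠ 0)
    (hInv : ∀ J : Ideal R, J.FG → Ideal.span {a} ≤ J → IsInvertibleIdeal J) (b : R) :
    a ∣ b ∨ b ∣ a := by
  have hle : Ideal.span {a} ≤ Ideal.span {a, b} :=
    Ideal.span_mono (Set.singleton_subset_iff.mpr (Set.mem_insert _ _))
  obtain ⟨d, hd⟩ := aux_invertible_principal _
    (hInv (Ideal.span {a, b}) (Submodule.fg_span (Set.toFinite _)) hle)
  have hda : d ∣ a := Ideal.mem_span_singleton.mp
    (by rw [← hd]; exact Ideal.subset_span (Set.mem_insert _ _))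
  have hdb : d ∣ b := Ideal.mem_span_singleton.mp
    (by rw [← hd]; exact Ideal.subset_span (Set.mem_insert_of_mem _ rfl))
  obtain ⟨a₁, ha₁⟩ := hda
  obtain ⟨b₁, hb₁⟩ := hdb
  have hdmem : d ∈ Ideal.span ({a, b} : Set R) := by
    rw [hd]; exact Ideal.mem_span_singleton_self d
  obtain ⟨u, v, huv⟩ := Ideal.mem_span_pair.mp hdmem
  have hd0 : d ≠ 0 := by rintro rfl; simp at ha₁; exact ha ha₁
  have h1 : u * a₁ + v * b₁ = 1 := by
    apply mul_left_cancel₀ hd0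
    linear_combination huv - u * ha₁ - v * hb₁
  rcases IsLocalRing.isUnit_or_isUnit_of_isUnit_add (h1 ▸ isUnit_one) with hu | hu
  · obtain ⟨au, hau⟩ := isUnit_of_mul_isUnit_right hu
    left
    refine ⟨↑au⁻¹ * b₁, ?_⟩
    have hda' : a * ↑au⁻¹ = d := by
      rw [ha₁, ← hau, Units.mul_inv_cancel_right]
    rw [← mul_assoc, hda', ← hb₁]
  · obtain ⟨bu, hbu⟩ := isUnit_of_mul_isUnit_right hu
    right
    refine ⟨↑bu⁻¹ * a₁, ?_⟩
    have hdb' : b * ↑bu⁻¹ = d := by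
      rw [hb₁, ← hbu, Units.mul_inv_cancel_right]
    rw [← mul_assoc, hdb', ← ha₁]

/-- Primes containing `a` are comparable. -/
theorem aux_primes_comp {a : R} (ha : a ≠ 0)
    (hInv : ∀ J : Ideal R, J.FG → Ideal.span {a} ≤ J → IsInvertibleIdeal J)
    {P Q : Ideal R} (hP : P.IsPrime) (hQ : Q.IsPrime) (haP : a ∈ P) (haQ : a ∈ Q) :
    P ≤ Q ∨ Q ≤ P := by
  by_contra hc
  push_neg at hc
  obtain ⟨hPQ, hQP⟩ := hc
  obtain ⟨p, hpP, hpQ⟩ := SetLike.not_le_iff_exists.mp hPQ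
  obtain ⟨q, hqQ, hqP⟩ := SetLike.not_le_iff_exists.mp hQP
  have hle : Ideal.span {a} ≤ Ideal.span {a, p, q} :=
    Ideal.span_mono (Set.singleton_subset_iff.mpr (Set.mem_insert _ _))
  obtain ⟨d, hd⟩ := aux_invertible_principal _
    (hInv (Ideal.span {a, p, q}) (Submodule.fg_span (Set.toFinite _)) hle)
  have hda : d ∣ a := Ideal.mem_span_singleton.mp
    (by rw [← hd]; exact Ideal.subset_span (by simp))
  have hdp : d ∣ p := Ideal.mem_span_singleton.mp
    (by rw [← hd]; exact Ideal.subset_span (by simp))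
  have hdq : d ∣ q := Ideal.mem_span_singleton.mp
    (by rw [← hd]; exact Ideal.subset_span (by simp))
  obtain ⟨a₁, ha₁⟩ := hda
  obtain ⟨p₁, hp₁⟩ := hdp
  obtain ⟨q₁, hq₁⟩ := hdq
  have hdmem : d ∈ Ideal.span ({a, p, q} : Set R) := by
    rw [hd]; exact Ideal.mem_span_singleton_self d
  obtain ⟨α, z, hz, hins⟩ := Ideal.mem_span_insert.mp hdmem
  obtain ⟨β, γ, hβγ⟩ := Ideal.mem_span_pair.mp hz
  have hd0 : d ≠ 0 := by rintro rfl; simp at ha₁; exact ha ha₁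
  have h1 : α * a₁ + (β * p₁ + γ * q₁) = 1 := by
    apply mul_left_cancel₀ hd0
    linear_combination (-1 : R) * hins + hβγ - α * ha₁ - β * hp₁ - γ * hq₁
  rcases IsLocalRing.isUnit_or_isUnit_of_isUnit_add (h1 ▸ isUnit_one) with hu | hu
  · obtain ⟨au, hau⟩ := isUnit_of_mul_isUnit_right hu
    -- then a ∣ p, so p ∈ Q, contradiction
    apply hpQ
    have hda' : a * ↑au⁻¹ = d := by
      rw [ha₁, ← hau, Units.mul_inv_cancel_right]
    have hadvd : a ∣ p := ⟨↑au⁻¹ * p₁, by rw [← mul_assoc, hda', ← hp₁]⟩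
    obtain ⟨c, rfl⟩ := hadvd
    exact Ideal.mul_mem_right _ _ haQ
  rcases IsLocalRing.isUnit_or_isUnit_of_isUnit_add hu with hu' | hu'
  · obtain ⟨pu, hpu⟩ := isUnit_of_mul_isUnit_right hu'
    -- then p ∣ q, so q ∈ P, contradiction
    apply hqP
    have hdp' : p * ↑pu⁻¹ = d := by
      rw [hp₁, ← hpu, Units.mul_inv_cancel_right]
    have hpdvd : p ∣ q := ⟨↑pu⁻¹ * q₁, by rw [← mul_assoc, hdp', ← hq₁]⟩
    obtain ⟨c, rfl⟩ := hpdvd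
    exact Ideal.mul_mem_right _ _ hpP
  · obtain ⟨qu, hqu⟩ := isUnit_of_mul_isUnit_right hu'
    -- then q ∣ p, so p ∈ Q, contradiction
    apply hpQ
    have hdq' : q * ↑qu⁻¹ = d := by
      rw [hq₁, ← hqu, Units.mul_inv_cancel_right]
    have hqdvd : q ∣ p := ⟨↑qu⁻¹ * p₁, by rw [← mul_assoc, hdq', ← hp₁]⟩
    obtain ⟨c, rfl⟩ := hqdvd
    exact Ideal.mul_mem_right _ _ hqQ

end Aux

/-- A local `d`-super potent domain of Krull dimension two has exactly two
nonzero prime ideals. -/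
theorem two_dim_dSuperPotent_two_primes {R : Type*} [CommRing R] [IsDomain R] [IsLocalRing R]
    (h : IsDSuperPotent (IsLocalRing.maximalIdeal R)) (hdim : ringKrullDim R = 2) :
    ∃ P Q : Ideal R, P.IsPrime ∧ Q.IsPrime ∧ P ≠ ⊥ ∧ Q ≠ ⊥ ∧ P ≠ Q ∧
      ∀ L : Ideal R, L.IsPrime → L ≠ ⊥ → L = P ∨ L = Q := by
  classical
  obtain ⟨I, hIbot, hIfg, hIM, hInv⟩ := h
  obtain ⟨a, rfl⟩ := aux_invertible_principal I (hInv I hIfg le_rfl)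
  have ha : a ≠ 0 := by
    rintro rfl; exact hIbot (by simp)
  have haM : a ∈ IsLocalRing.maximalIdeal R := hIM (Ideal.mem_span_singleton_self a)
  have hnua : ¬IsUnit a := haM
  set M := IsLocalRing.maximalIdeal R with hMdef
  have hMprime : M.IsPrime := (IsLocalRing.maximalIdeal.isMaximal R).isPrime
  have hMbot : M ≠ ⊥ := fun hM => ha (by rw [← Ideal.mem_bot, ← hM]; exact haM)
  have hcomp : ∀ b : R, a ∣ b ∨ b ∣ a := aux_comp ha hInv
  -- N = ⋂ (aⁿ)
  set N : Ideal R := ⨅ n : ℕ, Ideal.span {a ^ n} with hNdef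
  have hmemN : ∀ x : R, x ∈ N ↔ ∀ n : ℕ, a ^ n ∣ x := by
    intro x
    simp [hNdef, Ideal.mem_iInf, Ideal.mem_span_singleton]
  have haN : a ∉ N := by
    intro hx
    obtain ⟨c, hc⟩ := (hmemN a).mp hx 2
    apply hnua
    have : a * 1 = a * (a * c) := by linear_combination hc
    exact IsUnit.of_mul_eq_one _ (mul_left_cancel₀ ha this).symm
  -- x ∉ N → x divides some power of a
  have hNdvd : ∀ x : R, x ∉ N → ∃ k : ℕ, x ∣ a ^ k := by
    intro x hx
    rw [hmemN] at hx
    push_neg at hx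
    obtain ⟨n, hn⟩ := hx
    induction n with
    | zero => exact absurd (one_dvd x) (by simpa using hn)
    | succ n ih =>
      by_cases h' : a ^ n ∣ x
      · obtain ⟨y, rfl⟩ := h'
        have hay : ¬a ∣ y := fun ⟨z, hz⟩ => hn ⟨z, by rw [hz]; ring⟩
        have hya : y ∣ a := (hcomp y).resolve_left hay
        obtain ⟨c, hc⟩ := hya
        exact ⟨n + 1, ⟨c, by rw [pow_succ, hc]; ring⟩⟩
      · exact ih h'
  have hNprime : N.IsPrime := by
    constructor
    · intro hN
      apply haN
      rw [hN]; trivial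
    · intro x y hxy
      by_contra hc
      push_neg at hc
      obtain ⟨hx, hy⟩ := hc
      obtain ⟨k, s, hs⟩ := hNdvd x hx
      obtain ⟨m, t, ht⟩ := hNdvd y hy
      obtain ⟨w, hw⟩ := (hmemN _).mp hxy (k + m + 1)
      apply hnua
      have hcan : a ^ (k + m) * 1 = a ^ (k + m) * (a * (w * (s * t))) := by
        rw [mul_one]
        calc a ^ (k + m) = a ^ k * a ^ m := by rw [pow_add]
          _ = (x * y) * (s * t) := by rw [hs, ht]; ring
          _ = (a ^ (k + m + 1) * w) * (s * t) := by rw [← hw]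
          _ = a ^ (k + m) * (a * (w * (s * t))) := by rw [pow_succ]; ring
      have := mul_left_cancel₀ (pow_ne_zero _ ha) hcan
      exact IsUnit.of_mul_eq_one _ this.symm
  -- primes not containing a are contained in N
  have hsubN : ∀ Q : Ideal R, Q.IsPrime → a ∉ Q → Q ≤ N := by
    intro Q hQ haQ x hxQ
    rw [hmemN]
    intro n
    induction n with
    | zero => simp
    | succ n ih =>
      obtain ⟨y, rfl⟩ := ih
      have hyQ : y ∈ Q := by
        rcases hQ.mem_or_mem hxQ with h' | h'
        · exact absurd (hQ.mem_of_pow_mem _ h') haQ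
        · exact h'
      have hay : a ∣ y := by
        rcases hcomp y with h' | h'
        · exact h'
        · obtain ⟨c, hc⟩ := h'
          exact absurd (hc ▸ Ideal.mul_mem_right _ _ hyQ) haQ
      obtain ⟨z, rfl⟩ := hay
      exact ⟨z, by rw [pow_succ]; ring⟩
  -- primes not containing a are below span {a} ≤ any prime containing a
  have hsubA : ∀ Q : Ideal R, Q.IsPrime → a ∉ Q → Q ≤ Ideal.span {a} := by
    intro Q hQ haQ x hxQ
    rw [Ideal.mem_span_singleton]
    rcases hcomp x with h' | h'
    · exact h'
    · obtain ⟨c, hc⟩ := h'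
      exact absurd (hc ▸ Ideal.mul_mem_right _ _ hxQ) haQ
  -- no chain of three nonzero primes
  have no3 : ∀ q₁ q₂ q₃ : Ideal R, q₁.IsPrime → q₂.IsPrime → q₃.IsPrime →
      ⊥ < q₁ → q₁ < q₂ → q₂ < q₃ → False := by
    intro q₁ q₂ q₃ h₁ h₂ h₃ hlt₁ hlt₂ hlt₃
    let l : LTSeries (PrimeSpectrum R) := RelSeries.fromListIsChain
      [⟨⊥, Ideal.bot_prime⟩, ⟨q₁, h₁⟩, ⟨q₂, h₂⟩, ⟨q₃, h₃⟩] (by simp)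
      (by
        refine List.isChain_cons_cons.mpr ⟨?_, List.isChain_cons_cons.mpr ⟨?_, List.isChain_pair.mpr ?_⟩⟩ <;>
          change (_ : PrimeSpectrum R) < _ <;> rw [← PrimeSpectrum.asIdeal_lt_asIdeal] <;> assumption)
    have hlen : l.length = 3 := by simp [l, RelSeries.fromListIsChain]
    have := Order.LTSeries.length_le_krullDim l
    rw [hlen] at this
    rw [show Order.krullDim (PrimeSpectrum R) = ringKrullDim R from rfl, hdim] at this
    norm_num at this
  -- a middle prime exists
  have hex : ∃ P : Ideal R, P.IsPrime ∧ ⊥ < P ∧ P < M := by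
    have hex2 : ∃ p : LTSeries (PrimeSpectrum R), 2 ≤ p.length := by
      by_contra hc
      push_neg at hc
      have hle1 : ringKrullDim R ≤ ((1 : ℕ∞) : WithBot ℕ∞) := by
        rw [ringKrullDim, Order.krullDim_eq_iSup_length]
        exact WithBot.coe_le_coe.mpr
          (iSup_le fun p => by exact_mod_cast Nat.lt_succ_iff.mp (hc p))
      rw [hdim] at hle1
      exact absurd hle1 (by decide)
    obtain ⟨p, hp2⟩ := hex2
    have h01 : p ⟨0, by omega⟩ < p ⟨1, by omega⟩ := p.strictMono (by simp [Fin.lt_def])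
    have h12 : p ⟨1, by omega⟩ < p ⟨2, by omega⟩ := p.strictMono (by simp [Fin.lt_def])
    refine ⟨(p ⟨1, by omega⟩).asIdeal, (p ⟨1, by omega⟩).isPrime, ?_, ?_⟩
    · have := (PrimeSpectrum.asIdeal_lt_asIdeal _ _).mpr h01
      exact lt_of_le_of_lt bot_le this
    · have hlt := (PrimeSpectrum.asIdeal_lt_asIdeal _ _).mpr h12
      exact lt_of_lt_of_le hlt
        (IsLocalRing.le_maximalIdeal (p ⟨2, by omega⟩).isPrime.ne_top)
  obtain ⟨P, hPprime, hPbot, hPM⟩ := hex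
  refine ⟨P, M, hPprime, hMprime, hPbot.ne', hMbot, hPM.ne, ?_⟩
  intro L hL hLbot
  by_cases hLM : L = M
  · exact Or.inr hLM
  · left
    have hLltM : L < M := lt_of_le_of_ne (IsLocalRing.le_maximalIdeal hL.ne_top) hLM
    -- L and P are comparable
    have hcompLP : L ≤ P ∨ P ≤ L := by
      by_cases haL : a ∈ L <;> by_cases haP : a ∈ P
      · exact aux_primes_comp ha hInv hL hPprime haL haP
      · exact Or.inr (le_trans (hsubA P hPprime haP)
          ((Ideal.span_singleton_le_iff_mem _).mpr haL))
      · exact Or.inl (le_trans (hsubA L hL haL)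
          ((Ideal.span_singleton_le_iff_mem _).mpr haP))
      · -- both below N; in fact both equal N
        have hLN : L ≤ N := hsubN L hL haL
        have hPN : P ≤ N := hsubN P hPprime haP
        have hNM : N < M := lt_of_le_of_ne (IsLocalRing.le_maximalIdeal hNprime.ne_top)
          (fun hNM => haN (hNM ▸ haM))
        have hLeqN : L = N := by
          by_contra hne
          exact no3 L N M hL hNprime hMprime (bot_lt_iff_ne_bot.mpr hLbot)
            (lt_of_le_of_ne hLN hne) hNM
        have hPeqN : P = N := by
          by_contra hne
          exact no3 P N M hPprime hNprime hMprime hPbot (lt_of_le_of_ne hPN hne) hNM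
        rw [hLeqN, hPeqN]
        exact Or.inl le_rfl
    rcases hcompLP with hle | hle
    · by_contra hne
      exact no3 L P M hL hPprime hMprime (bot_lt_iff_ne_bot.mpr hLbot)
        (lt_of_le_of_ne hle hne) hPM
    · by_contra hne
      exact no3 P L M hPprime hL hMprime hPbot
        (lt_of_le_of_ne hle (fun h' => hne h'.symm)) hLltM
end

section
/- Let R be a Noetherian integral domain. If M is a t-super potent maximal t-ideal of R, then M has height one. -/
open FractionalIdeal

namespace TAux

variable {R : Type*} [CommRing R] [IsDomain R]

lemma one_div_ne_zero {J : FracId R} (hJ : J ≠ 0) : (1 : FracId R) / J ≠ 0 := by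
  obtain ⟨a, haS, ha⟩ := J.isFractional
  have hmem : algebraMap R (FractionRing R) a ∈ (1 : FracId R) / J := by
    rw [mem_div_iff_of_ne_zero hJ]
    intro y hy
    obtain ⟨r, hr⟩ := ha y hy
    exact (mem_one_iff _).mpr ⟨r, hr.trans (Algebra.smul_def a y)⟩
  intro h0
  rw [h0, mem_zero_iff] at hmem
  exact (map_ne_zero_iff _ (IsFractionRing.injective R (FractionRing R))).mpr
    (nonZeroDivisors.ne_zero haS) hmem

lemma le_vOp {J : FracId R} (hJ : J ≠ 0) : J ≤ vOp J :=
  (le_div_iff_mul_le (one_div_ne_zero hJ)).mpr mul_one_div_le_one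

lemma one_div_anti {J₁ J₂ : FracId R} (h1 : J₁ ≠ 0) (h : J₁ ≤ J₂) :
    (1 : FracId R) / J₂ ≤ 1 / J₁ := by
  refine (le_div_iff_mul_le h1).mpr ?_
  calc (1 : FracId R) / J₂ * J₁ ≤ 1 / J₂ * J₂ := mul_right_mono h
    _ = J₂ * (1 / J₂) := mul_comm _ _
    _ ≤ 1 := mul_one_div_le_one

lemma vOp_mono {J₁ J₂ : FracId R} (h1 : J₁ ≠ 0) (h : J₁ ≤ J₂) : vOp J₁ ≤ vOp J₂ := by
  have h2 : J₂ ≠ 0 := fun h0 => h1 (le_antisymm (h0 ▸ h) (zero_le _))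
  exact one_div_anti (one_div_ne_zero h2) (one_div_anti h1 h)

lemma vOp_ne_zero {J : FracId R} (hJ : J ≠ 0) : vOp J ≠ 0 :=
  fun h => hJ (le_antisymm (h ▸ le_vOp hJ) (zero_le _))

lemma vOp_idem {J : FracId R} (hJ : J ≠ 0) : vOp (vOp J) = vOp J := by
  refine le_antisymm ?_ (le_vOp (vOp_ne_zero hJ))
  exact one_div_anti (one_div_ne_zero hJ) (le_vOp (one_div_ne_zero hJ))

lemma mem_tOp_of {I J : FracId R} {x : FractionRing R} (hJ : J ≠ 0)
    (hfg : (J : Submodule R (FractionRing R)).FG) (hle : J ≤ I) (hx : x ∈ vOp J) :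
    x ∈ tOp I := by
  have h : ((vOp J : FracId R) : Submodule R (FractionRing R)) ≤ tOp I :=
    le_iSup₂_of_le J ⟨hJ, hfg, hle⟩ le_rfl
  exact h (mem_coe.mpr hx)

lemma tOp_le_of {I : FracId R} {T : Submodule R (FractionRing R)}
    (h : ∀ J : FracId R, J ≠ 0 → (J : Submodule R (FractionRing R)).FG → J ≤ I →
      ((vOp J : FracId R) : Submodule R (FractionRing R)) ≤ T) : tOp I ≤ T :=
  iSup₂_le fun J hJ => h J hJ.1 hJ.2.1 hJ.2.2

lemma tOp_mono {I I' : FracId R} (h : I ≤ I') : tOp I ≤ tOp I' :=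
  tOp_le_of fun J hJ hfg hle => le_iSup₂_of_le J ⟨hJ, hfg, hle.trans h⟩ le_rfl

lemma le_tOp (I : FracId R) : (I : Submodule R (FractionRing R)) ≤ tOp I := by
  intro x hx
  rcases eq_or_ne x 0 with rfl | hx0
  · exact Submodule.zero_mem _
  have hxI : x ∈ I := mem_coe.mp hx
  refine mem_tOp_of (J := spanSingleton (nonZeroDivisors R) x) ?_ ?_ ?_ ?_
  · exact spanSingleton_ne_zero_iff.mpr hx0
  · rw [coe_spanSingleton]; exact Submodule.fg_span_singleton x
  · exact spanSingleton_le_iff_mem.mpr hxI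
  · have h : vOp (spanSingleton (nonZeroDivisors R) x) = spanSingleton (nonZeroDivisors R) x := by
      rw [vOp, one_div_spanSingleton, one_div_spanSingleton, inv_inv]
    rw [h]
    exact mem_spanSingleton_self _ _

lemma vOp_le_one {J : FracId R} (hJ : J ≠ 0) (h : J ≤ 1) : vOp J ≤ 1 := by
  have h1 : (1 : FracId R) ≤ 1 / J :=
    (le_div_iff_mul_le hJ).mpr (by rw [one_mul]; exact h)
  calc vOp J = 1 / (1 / J) := rfl
    _ ≤ 1 / 1 := one_div_anti one_ne_zero h1
    _ = 1 := div_one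

lemma tOp_le_one {I : FracId R} (h : I ≤ 1) :
    tOp I ≤ ((1 : FracId R) : Submodule R (FractionRing R)) :=
  tOp_le_of fun J hJ _ hle => coe_le_coe.mpr (vOp_le_one hJ (hle.trans h))

lemma exists_fg_of_le_tOp {I : FracId R} {N : Submodule R (FractionRing R)} (hfg : N.FG)
    (hbot : N ≠ ⊥) (hle : N ≤ tOp I) :
    ∃ J : FracId R, J ≠ 0 ∧ (J : Submodule R (FractionRing R)).FG ∧ J ≤ I ∧
      N ≤ ((vOp J : FracId R) : Submodule R (FractionRing R)) := by
  classical
  set s : Set (FracId R) := {J | J ≠ 0 ∧ (J : Submodule R (FractionRing R)).FG ∧ J ≤ I} with hs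
  have himg : tOp I = sSup ((fun J : FracId R =>
      ((vOp J : FracId R) : Submodule R (FractionRing R))) '' s) := by
    rw [sSup_image]; rfl
  rcases s.eq_empty_or_nonempty with he | hne
  · rw [himg, he, Set.image_empty, sSup_empty] at hle
    exact absurd (le_bot_iff.mp hle) hbot
  have hdir : DirectedOn (· ≤ ·) ((fun J : FracId R =>
      ((vOp J : FracId R) : Submodule R (FractionRing R))) '' s) := by
    rintro _ ⟨J₁, hJ₁, rfl⟩ _ ⟨J₂, hJ₂, rfl⟩
    refine ⟨_, ⟨J₁ ⊔ J₂, ⟨?_, ?_, ?_⟩, rfl⟩, ?_, ?_⟩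
    · exact fun h0 => hJ₁.1 (le_antisymm (h0 ▸ le_sup_left) (zero_le _))
    · exact Submodule.FG.sup hJ₁.2.1 hJ₂.2.1
    · exact sup_le hJ₁.2.2 hJ₂.2.2
    · exact coe_le_coe.mpr (vOp_mono hJ₁.1 le_sup_left)
    · exact coe_le_coe.mpr (vOp_mono hJ₂.1 le_sup_right)
  have hcomp := (Submodule.fg_iff_compact N).mp hfg
  rw [CompleteLattice.isCompactElement_iff_le_of_directed_sSup_le] at hcomp
  obtain ⟨x, ⟨J, hJ, rfl⟩, hx⟩ := hcomp _ (hne.image _) hdir (himg ▸ hle)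
  exact ⟨J, hJ.1, hJ.2.1, hJ.2.2, hx⟩

lemma tOp_idem {I A : FracId R} (hA : ((A : FracId R) : Submodule R (FractionRing R)) = tOp I) :
    tOp A = ((A : FracId R) : Submodule R (FractionRing R)) := by
  refine le_antisymm ?_ (le_tOp A)
  refine tOp_le_of fun J hJ hfg hle => ?_
  have hJA : (J : Submodule R (FractionRing R)) ≤ tOp I := hA ▸ coe_le_coe.mpr hle
  have hJbot : (J : Submodule R (FractionRing R)) ≠ ⊥ := coeToSubmodule_ne_bot.mpr hJ
  obtain ⟨J', hJ'0, hJ'fg, hJ'le, hJJ'⟩ := exists_fg_of_le_tOp hfg hJbot hJA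
  have h1 : vOp J ≤ vOp J' := by
    have h2 : J ≤ vOp J' := coe_le_coe.mp hJJ'
    calc vOp J ≤ vOp (vOp J') := vOp_mono hJ h2
      _ = vOp J' := vOp_idem hJ'0
  rw [hA]
  exact le_trans (coe_le_coe.mpr h1) (le_iSup₂_of_le J' ⟨hJ'0, hJ'fg, hJ'le⟩ le_rfl)

lemma spanSingleton_mul_ne_zero {c : FractionRing R} (hc : c ≠ 0) {J : FracId R} (hJ : J ≠ 0) :
    spanSingleton (nonZeroDivisors R) c * J ≠ 0 := by
  intro h0
  apply hJ
  have h := congrArg (fun X => spanSingleton (nonZeroDivisors R) c⁻¹ * X) h0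
  simpa [← mul_assoc, spanSingleton_mul_spanSingleton, inv_mul_cancel₀ hc,
    spanSingleton_one] using h

lemma one_div_spanSingleton_mul {c : FractionRing R} (hc : c ≠ 0) {J : FracId R} (hJ : J ≠ 0) :
    (1 : FracId R) / (spanSingleton (nonZeroDivisors R) c * J) =
      spanSingleton (nonZeroDivisors R) c⁻¹ * ((1 : FracId R) / J) := by
  have hcJ := spanSingleton_mul_ne_zero hc hJ
  refine le_antisymm ?_ ?_
  · have h2 : spanSingleton (nonZeroDivisors R) c *
        ((1 : FracId R) / (spanSingleton (nonZeroDivisors R) c * J)) ≤ 1 / J := by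
      refine (le_div_iff_mul_le hJ).mpr ?_
      have h3 : spanSingleton (nonZeroDivisors R) c *
            (1 / (spanSingleton (nonZeroDivisors R) c * J)) * J
          = spanSingleton (nonZeroDivisors R) c * J *
            (1 / (spanSingleton (nonZeroDivisors R) c * J)) := by ring
      rw [h3]
      exact mul_one_div_le_one
    calc (1 : FracId R) / (spanSingleton (nonZeroDivisors R) c * J)
        = spanSingleton (nonZeroDivisors R) c⁻¹ * (spanSingleton (nonZeroDivisors R) c *
            (1 / (spanSingleton (nonZeroDivisors R) c * J))) := by
          rw [← mul_assoc, spanSingleton_mul_spanSingleton, inv_mul_cancel₀ hc,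
            spanSingleton_one, one_mul]
      _ ≤ spanSingleton (nonZeroDivisors R) c⁻¹ * (1 / J) := mul_right_mono h2
  · refine (le_div_iff_mul_le hcJ).mpr ?_
    have h4 : spanSingleton (nonZeroDivisors R) c⁻¹ * (1 / J) *
          (spanSingleton (nonZeroDivisors R) c * J)
        = spanSingleton (nonZeroDivisors R) c⁻¹ * spanSingleton (nonZeroDivisors R) c *
          (J * (1 / J)) := by ring
    rw [h4, spanSingleton_mul_spanSingleton, inv_mul_cancel₀ hc, spanSingleton_one, one_mul]
    exact mul_one_div_le_one

lemma vOp_spanSingleton_mul {c : FractionRing R} (hc : c ≠ 0) {J : FracId R} (hJ : J ≠ 0) :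
    vOp (spanSingleton (nonZeroDivisors R) c * J) = spanSingleton (nonZeroDivisors R) c * vOp J := by
  rw [vOp, vOp, one_div_spanSingleton_mul hc hJ,
    one_div_spanSingleton_mul (inv_ne_zero hc) (one_div_ne_zero hJ), inv_inv]

lemma smul_mem_tOp {c x : FractionRing R} (hc : c ≠ 0) {I : FracId R} (hx : x ∈ tOp I) :
    c * x ∈ tOp (spanSingleton (nonZeroDivisors R) c * I) := by
  rcases eq_or_ne x 0 with rfl | hx0
  · simpa using Submodule.zero_mem _
  obtain ⟨J, hJ0, hJfg, hJle, hsub⟩ := exists_fg_of_le_tOp (Submodule.fg_span_singleton x)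
    (by simp [Submodule.span_singleton_eq_bot, hx0])
    ((Submodule.span_singleton_le_iff_mem _ _).mpr hx)
  have hxvJ : x ∈ vOp J := mem_coe.mp (hsub (Submodule.mem_span_singleton_self x))
  refine mem_tOp_of (J := spanSingleton (nonZeroDivisors R) c * J)
    (spanSingleton_mul_ne_zero hc hJ0) ?_ (mul_right_mono hJle) ?_
  · rw [coe_mul, coe_spanSingleton]
    exact Submodule.FG.mul (Submodule.fg_span_singleton c) hJfg
  · rw [vOp_spanSingleton_mul hc hJ0]
    exact mul_mem_mul (mem_spanSingleton_self _ _) hxvJ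

lemma isMaxTIdeal_isPrime {M : Ideal R} (hM : IsMaxTIdeal M) : M.IsPrime := by
  obtain ⟨hMtop, ⟨hMbot, hMt⟩, hmax⟩ := hM
  have hinjK : Function.Injective (algebraMap R (FractionRing R)) :=
    IsFractionRing.injective R (FractionRing R)
  constructor
  · exact hMtop
  intro a b hab
  by_cases ha : a ∈ M
  · exact Or.inl ha
  right
  rcases eq_or_ne b 0 with rfl | hb
  · exact M.zero_mem
  set A : Ideal R := M ⊔ Ideal.span {a} with hA
  have hMA : M ≤ A := le_sup_left
  have hA1 : ((A : FracId R)) ≤ 1 := coeIdeal_le_one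
  set T : Submodule R (FractionRing R) := tOp (A : FracId R) with hT
  have hT1 : T ≤ ((1 : FracId R) : Submodule R (FractionRing R)) := tOp_le_one hA1
  set N : Ideal R := Submodule.comap (Algebra.linearMap R (FractionRing R)) T with hN
  have hNcoe : ((N : FracId R) : Submodule R (FractionRing R)) = T := by
    apply le_antisymm
    · intro y hy
      obtain ⟨r, hrN, rfl⟩ := (mem_coeIdeal _).mp (mem_coe.mp hy)
      exact hrN
    · intro y hy
      rcases (mem_one_iff _).mp (mem_coe.mp (hT1 hy)) with ⟨r, rfl⟩
      exact mem_coe.mpr ((mem_coeIdeal _).mpr ⟨r, hy, rfl⟩)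
  have hsubN : ∀ r ∈ A, r ∈ N := fun r hr =>
    le_tOp (A : FracId R) (mem_coe.mpr (mem_coeIdeal_of_mem _ hr))
  by_cases hNtop : N = ⊤
  · have h1T : (1 : FractionRing R) ∈ T := by
      have h0 : (1 : R) ∈ N := hNtop ▸ trivial
      have h0' : algebraMap R (FractionRing R) 1 ∈ T := h0
      rwa [_root_.map_one] at h0'
    have hcb : (algebraMap R (FractionRing R) b) ≠ 0 :=
      (map_ne_zero_iff _ hinjK).mpr hb
    have h2 := smul_mem_tOp hcb h1T
    have h3 : spanSingleton (nonZeroDivisors R) (algebraMap R (FractionRing R) b) *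
        (A : FracId R) ≤ (M : FracId R) := by
      rw [mul_le]
      intro i hi j hj
      obtain ⟨z, hz⟩ := (mem_spanSingleton _).mp hi
      obtain ⟨n, hnA, rfl⟩ := (mem_coeIdeal _).mp hj
      have hbn : b * n ∈ M := by
        obtain ⟨m, hmM, w, hw, rfl⟩ := Submodule.mem_sup.mp hnA
        obtain ⟨t, rfl⟩ := Ideal.mem_span_singleton'.mp hw
        have he : b * (m + t * a) = b * m + t * (a * b) := by ring
        rw [he]
        exact M.add_mem (M.mul_mem_left b hmM) (M.mul_mem_left t hab)
      have he2 : i * algebraMap R (FractionRing R) n =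
          algebraMap R (FractionRing R) (z * (b * n)) := by
        rw [← hz, Algebra.smul_def, _root_.map_mul, _root_.map_mul]; ring
      rw [he2]
      exact mem_coeIdeal_of_mem _ (M.mul_mem_left z hbn)
    have h4 := tOp_mono h3
    rw [hMt] at h4
    have h5 := h4 h2
    rw [mul_one] at h5
    obtain ⟨m', hm'M, hm'⟩ := (mem_coeIdeal _).mp (mem_coe.mp h5)
    exact (hinjK hm') ▸ hm'M
  · exfalso
    have hNbot : N ≠ ⊥ := by
      intro h0
      apply hMbot
      rw [eq_bot_iff]
      intro m hm
      have : m ∈ N := hsubN m (hMA hm)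
      rw [h0] at this
      exact this
    have hNt : IsTIdeal N := ⟨hNbot, tOp_idem (hNcoe.trans hT)⟩
    have hMN : M ≤ N := fun r hr => hsubN r (hMA hr)
    have heq := hmax N hNtop hNt hMN
    apply ha
    rw [← heq]
    exact hsubN a (Ideal.mem_sup_right (Ideal.mem_span_singleton_self a))

end TAux
/-- In a Noetherian domain, a `t`-super potent maximal `t`-ideal has height
one. -/
theorem noetherian_tSuperPotent_height_one {R : Type*} [CommRing R] [IsDomain R]
    [IsNoetherianRing R] (M : Ideal R) (hM : IsTSuperPotent M) : HeightOnePrime M := by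
  obtain ⟨hMax, I, hISR, hIM⟩ := hM
  have hprime : M.IsPrime := TAux.isMaxTIdeal_isPrime hMax
  have hMtop : M ≠ ⊤ := hMax.1
  have hMbot : M ≠ ⊥ := hMax.2.1.1
  have hMt : tOp (M : FracId R) = ((M : FracId R) : Submodule R (FractionRing R)) := hMax.2.1.2
  have hMfg : M.FG := IsNoetherian.noetherian M
  have hInv : IsTInvertible M := hISR.2 M hMfg hIM
  have hinjK : Function.Injective (algebraMap R (FractionRing R)) :=
    IsFractionRing.injective R (FractionRing R)
  have hne : ¬ ((M : FracId R) * ((1 : FracId R) / (M : FracId R)) ≤ (M : FracId R)) := by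
    intro hle
    have h1 := TAux.tOp_mono hle
    rw [hInv.2, hMt] at h1
    have h2 : (1 : FractionRing R) ∈ ((M : FracId R) : Submodule R (FractionRing R)) :=
      h1 (FractionalIdeal.mem_coe.mpr (FractionalIdeal.one_mem_one _))
    obtain ⟨r, hrM, hr⟩ := (FractionalIdeal.mem_coeIdeal _).mp (FractionalIdeal.mem_coe.mp h2)
    apply hMtop
    rw [Ideal.eq_top_iff_one]
    have hr1 : r = 1 := hinjK (by rw [hr, _root_.map_one])
    exact hr1 ▸ hrM
  rw [FractionalIdeal.mul_le] at hne
  push_neg at hne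
  obtain ⟨mK, hmK, x, hx, hnotin⟩ := hne
  obtain ⟨m₀, hm₀M, rfl⟩ := (FractionalIdeal.mem_coeIdeal _).mp hmK
  have hsmem : algebraMap R (FractionRing R) m₀ * x ∈ (1 : FracId R) :=
    FractionalIdeal.mul_one_div_le_one (FractionalIdeal.mul_mem_mul hmK hx)
  obtain ⟨s₀, hs₀⟩ := (FractionalIdeal.mem_one_iff _).mp hsmem
  have hs₀M : s₀ ∉ M := fun h => hnotin (by rw [← hs₀]; exact FractionalIdeal.mem_coeIdeal_of_mem _ h)
  have key : ∀ a ∈ M, ∃ r : R, s₀ * a = m₀ * r := by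
    intro a ha
    have hxa : x * algebraMap R (FractionRing R) a ∈ (1 : FracId R) := by
      have h3 : x * algebraMap R (FractionRing R) a ∈
          ((1 : FracId R) / (M : FracId R)) * (M : FracId R) :=
        FractionalIdeal.mul_mem_mul hx (FractionalIdeal.mem_coeIdeal_of_mem _ ha)
      have h4 : ((1 : FracId R) / (M : FracId R)) * (M : FracId R) ≤ 1 := by
        rw [mul_comm]; exact FractionalIdeal.mul_one_div_le_one
      exact h4 h3
    obtain ⟨r, hr⟩ := (FractionalIdeal.mem_one_iff _).mp hxa
    refine ⟨r, hinjK ?_⟩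
    rw [_root_.map_mul, _root_.map_mul, hs₀, hr]
    ring
  refine ⟨hprime, hMbot, ?_⟩
  intro Q hQ hQM
  by_contra hQbot
  have hQleM : Q ≤ M := hQM.le
  by_cases hm₀Q : m₀ ∈ Q
  · have hMQ : M ≤ Q := by
      intro a ha
      obtain ⟨r, hr⟩ := key a ha
      have h5 : s₀ * a ∈ Q := by rw [hr]; exact Q.mul_mem_right r hm₀Q
      rcases hQ.mem_or_mem h5 with h | h
      · exact absurd h fun hh => hs₀M (hQleM hh)
      · exact h
    exact hQM.not_ge hMQ
  · obtain ⟨q, hqQ, hq0⟩ := Submodule.exists_mem_ne_zero_of_ne_bot hQbot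
    haveI := hprime
    set Rm := Localization M.primeCompl with hRm
    haveI : IsNoetherianRing Rm :=
      IsLocalization.isNoetherianRing M.primeCompl Rm inferInstance
    set f := algebraMap R Rm with hf
    have hinj : Function.Injective f :=
      IsLocalization.injective Rm M.primeCompl_le_nonZeroDivisors
    set Q' : Ideal Rm := Q.map f with hQ'def
    have hdisj : Disjoint (M.primeCompl : Set R) (Q : Set R) :=
      Set.disjoint_left.mpr fun a haC haQ => haC (hQleM haQ)
    have hQ'prime : Q'.IsPrime :=
      IsLocalization.isPrime_of_isPrime_disjoint M.primeCompl Rm Q hQ hdisj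
    have hcomap : Ideal.comap f Q' = Q :=
      IsLocalization.comap_map_of_isPrime_disjoint M.primeCompl Rm hQ hdisj
    have hm₀Q' : f m₀ ∉ Q' := fun h => hm₀Q (by rw [← hcomap]; exact h)
    have hbase : Q' ≤ Ideal.span {f m₀} := by
      rw [Ideal.map_le_iff_le_comap]
      intro a ha
      obtain ⟨r, hr⟩ := key a (hQleM ha)
      have hu' : IsUnit (f s₀) := (IsLocalization.AtPrime.isUnit_to_map_iff Rm M s₀).mpr hs₀M
      obtain ⟨u, hu⟩ := hu'
      show f a ∈ Ideal.span {f m₀}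
      rw [Ideal.mem_span_singleton]
      refine ⟨(↑u⁻¹ : Rm) * f r, ?_⟩
      have h6 : f s₀ * f a = f m₀ * f r := by rw [← _root_.map_mul, ← _root_.map_mul, hr]
      calc f a = ↑u⁻¹ * (↑u * f a) := by rw [← mul_assoc, Units.inv_mul, one_mul]
        _ = ↑u⁻¹ * (f m₀ * f r) := by rw [hu, h6]
        _ = f m₀ * (↑u⁻¹ * f r) := by ring
    have hall : ∀ n : ℕ, Q' ≤ Ideal.span {f m₀} ^ n := by
      intro n
      induction n with
      | zero => simp
      | succ n ih =>
        intro y hy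
        have hyn := ih hy
        rw [Ideal.span_singleton_pow, Ideal.mem_span_singleton] at hyn
        obtain ⟨c, hc⟩ := hyn
        have hcQ' : c ∈ Q' := by
          rcases hQ'prime.mem_or_mem (show f m₀ ^ n * c ∈ Q' from hc ▸ hy) with h | h
          · exact absurd (hQ'prime.mem_of_pow_mem n h) hm₀Q'
          · exact h
        obtain ⟨d, hd⟩ := Ideal.mem_span_singleton.mp (hbase hcQ')
        rw [Ideal.span_singleton_pow, Ideal.mem_span_singleton]
        exact ⟨d, by rw [hc, hd, pow_succ, mul_assoc]⟩
    have hspan_ne : Ideal.span {f m₀} ≠ ⊤ := by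
      rw [Ne, Ideal.span_singleton_eq_top]
      intro hu
      exact ((IsLocalization.AtPrime.isUnit_to_map_iff Rm M m₀).mp hu) hm₀M
    have hbot := Ideal.iInf_pow_eq_bot_of_isDomain (I := Ideal.span {f m₀}) hspan_ne
    have hfq : f q ∈ (⊥ : Ideal Rm) := by
      rw [← hbot]
      exact (Submodule.mem_iInf _).mpr fun n => hall n (Ideal.mem_map_of_mem f hqQ)
    rw [Submodule.mem_bot] at hfq
    exact hq0 (hinj (by rw [hfq, _root_.map_zero]))
end
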